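/- arXiv:1608.07186 — 10 statements merged into one kernel-verified Lean document; each statement's English description precedes it below -/
import Mathlib

section
/- Fix s₀, θ₀ ∈ ℝ and assume Q(s₀,u) ≠ ∅ for every u ∈ M. Then the event {Q⁺_{s₀}(U*) ≤ θ₀} is measurable (it equals the countable intersection over ε = 1/n of the events {G_S(U*, θ₀+ε) > s₀}), the one-sided limit lim_{ε↓0} F_S(s₀, θ₀+ε) exists (F_S(s₀,·) is nonincreasing), and P(Q⁺_{s₀}(U*) ≤ θ₀) = 1 − lim_{ε↓0} F_S(s₀, θ₀+ε). -/
open MeasureTheory Filter Set Topology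

/-! By monotonicity of `G_S(u, ·)` and nonemptiness of the level set, `Q⁺_{s₀}(u) ≤ θ₀` holds iff
`s₀ < G_S(u, θ₀ + ε)` for every `ε > 0`. These events increase with `ε`, so continuity of `P` from
above identifies the probability of their intersection with the limit of their probabilities,
`1 - F_S(s₀, θ₀ + ε)` once `U*` is replaced by `U`. -/

theorem Monotone.sSup_levelSet_le_iff {f : ℝ → ℝ} (hf : Monotone f) {s : ℝ}
    (hs : {θ | f θ = s}.Nonempty) (θ₀ : ℝ) :
    sSup (Real.toEReal '' {θ | f θ = s}) ≤ θ₀ ↔ ∀ ε > 0, s < f (θ₀ + ε) := by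
  simp only [sSup_le_iff, forall_mem_image, EReal.coe_le_coe_iff]
  constructor
  · intro h ε hε
    obtain ⟨θ₁, hθ₁⟩ := hs
    have hθ₁_le : θ₁ ≤ θ₀ := h hθ₁
    refine lt_of_le_of_ne (hθ₁ ▸ hf (by linarith)) fun heq => ?_
    have : θ₀ + ε ≤ θ₀ := h heq.symm
    linarith
  · intro h θ hθ
    by_contra! hlt
    have := h (θ - θ₀) (by linarith)
    rw [add_sub_cancel, show f θ = s from hθ] at this
    exact this.false

theorem Monotone.forall_pos_lt_iff_forall_nat {f : ℝ → ℝ} (hf : Monotone f) (s θ₀ : ℝ) :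
    (∀ ε > 0, s < f (θ₀ + ε)) ↔ ∀ n : ℕ, s < f (θ₀ + 1 / ((n : ℝ) + 1)) := by
  refine ⟨fun h n => h _ Nat.one_div_pos_of_nat, fun h ε hε => ?_⟩
  obtain ⟨n, hn⟩ := exists_nat_one_div_lt hε
  exact (h n).trans_le (hf (by linarith))

section

variable {Ω : Type*} [MeasurableSpace Ω] (μ : Measure Ω) [IsFiniteMeasure μ] {f : Ω → ℝ → ℝ}

theorem antitone_measureReal_setOf_le (hmono : ∀ ω, Monotone (f ω)) (s : ℝ) :
    Antitone fun θ => μ.real {ω | f ω θ ≤ s} :=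
  fun _ _ hab => measureReal_mono fun ω hω => (hmono ω hab).trans hω

theorem tendsto_measureReal_setOf_lt_nhdsGT (hf : ∀ θ, Measurable fun ω => f ω θ)
    (hmono : ∀ ω, Monotone (f ω)) (s θ₀ : ℝ) :
    Tendsto (fun ε => μ.real {ω | s < f ω (θ₀ + ε)}) (𝓝[>] 0)
      (𝓝 (μ.real {ω | ∀ ε > 0, s < f ω (θ₀ + ε)})) := by
  have h := tendsto_measure_biInter_gt (μ := μ) (s := fun ε => {ω | s < f ω (θ₀ + ε)}) (a := 0)
    (fun _ _ => (measurableSet_lt measurable_const (hf _)).nullMeasurableSet)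
    (fun _ _ _ hij ω hω => hω.trans_le (hmono ω (by linarith))) ⟨1, one_pos, measure_ne_top _ _⟩
  have hinter : ⋂ ε > 0, {ω | s < f ω (θ₀ + ε)} = {ω | ∀ ε > 0, s < f ω (θ₀ + ε)} := by
    ext ω
    simp
  rw [hinter] at h
  exact (ENNReal.tendsto_toReal (measure_ne_top _ _)).comp h

end

/-- For a nondecreasing data generating equation with nonempty inverse images,
the event `{Q⁺_{s₀}(U*) ≤ θ₀}` is measurable (it equals the countable intersection over
`ε = 1/n` of the events `{G_S(U*, θ₀+ε) > s₀}`), the one-sided limit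
`lim_{ε↓0} F_S(s₀, θ₀+ε)` exists (`F_S(s₀,·)` being nonincreasing), and
`P(Q⁺_{s₀}(U*) ≤ θ₀) = 1 − lim_{ε↓0} F_S(s₀, θ₀+ε)`. -/
theorem fiducial_sup_inverse_image_prob
    {M Ω : Type*} [MeasurableSpace M] [MeasurableSpace Ω]
    (P : Measure Ω) [IsProbabilityMeasure P]
    (U Ustar : Ω → M) (hU : Measurable U) (hUstar : Measurable Ustar)
    (hdist : Measure.map Ustar P = Measure.map U P)
    (GS : M → ℝ → ℝ) (hGS : Measurable (Function.uncurry GS))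
    (hmono : ∀ u : M, Monotone (GS u))
    (s₀ θ₀ : ℝ)
    (hne : ∀ u : M, {θ : ℝ | GS u θ = s₀}.Nonempty) :
    MeasurableSet {ω : Ω | sSup (Real.toEReal '' {θ : ℝ | GS (Ustar ω) θ = s₀}) ≤ (θ₀ : EReal)} ∧
    ({ω : Ω | sSup (Real.toEReal '' {θ : ℝ | GS (Ustar ω) θ = s₀}) ≤ (θ₀ : EReal)} =
      ⋂ n : ℕ, {ω : Ω | s₀ < GS (Ustar ω) (θ₀ + 1 / ((n : ℝ) + 1))}) ∧
    Antitone (fun θ : ℝ => (P {ω : Ω | GS (U ω) θ ≤ s₀}).toReal) ∧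
    ∃ L : ℝ,
      Tendsto (fun ε : ℝ => (P {ω : Ω | GS (U ω) (θ₀ + ε) ≤ s₀}).toReal) (𝓝[>] 0) (𝓝 L) ∧
      (P {ω : Ω | sSup (Real.toEReal '' {θ : ℝ | GS (Ustar ω) θ = s₀}) ≤ (θ₀ : EReal)}).toReal
        = 1 - L := by
  have hslice (θ : ℝ) : Measurable fun u => GS u θ := hGS.of_uncurry_right
  have hlevel (u : M) := (hmono u).sSup_levelSet_le_iff (hne u) θ₀
  have hE : {ω | sSup (Real.toEReal '' {θ | GS (Ustar ω) θ = s₀}) ≤ (θ₀ : EReal)} =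
      ⋂ n : ℕ, {ω | s₀ < GS (Ustar ω) (θ₀ + 1 / ((n : ℝ) + 1))} := by
    ext ω
    simp only [mem_iInter, mem_ofPred_eq, hlevel, (hmono _).forall_pos_lt_iff_forall_nat]
  have hid : ProbabilityTheory.IdentDistrib Ustar U P P :=
    ⟨hUstar.aemeasurable, hU.aemeasurable, hdist⟩
  have hF (θ : ℝ) : P.real {ω | GS (U ω) θ ≤ s₀} = 1 - P.real {ω | s₀ < GS (Ustar ω) θ} := by
    have hlt : MeasurableSet {ω | s₀ < GS (Ustar ω) θ} :=
      hUstar (measurableSet_lt measurable_const (hslice θ))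
    rw [← probReal_compl_eq_one_sub hlt]
    simp only [compl_ofPred, not_lt]
    exact congrArg ENNReal.toReal
      (hid.measure_mem_eq (measurableSet_le (hslice θ) measurable_const)).symm
  refine ⟨hE ▸ .iInter fun _ => hUstar (measurableSet_lt measurable_const (hslice _)), hE,
    antitone_measureReal_setOf_le P (fun ω => hmono (U ω)) s₀, ?_⟩
  simp only [hlevel]
  refine ⟨_, ?_, (sub_sub_cancel _ _).symm⟩
  simp only [← measureReal_def, hF]
  exact (tendsto_measureReal_setOf_lt_nhdsGT P (f := fun ω => GS (Ustar ω))
    (fun θ => (hslice θ).comp hUstar) (fun ω => hmono (Ustar ω)) s₀ θ₀).const_sub 1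
end

section
/- Assume Q(s,u) ≠ ∅ for every u ∈ M and every s ∈ ℝ, and assume additionally that P(G_S(U,θ) = s) = 0 for all θ, s ∈ ℝ (the distribution of G_S(U,θ) is atomless for every θ). Then (i) for each fixed s ∈ ℝ the map θ ↦ F_S(s,θ) is continuous on ℝ, and (ii) for each fixed s₀ ∈ ℝ, Q⁺_{s₀}(U*) = Q⁻_{s₀}(U*) with probability 1. -/
/-!
Each `G_S(u, ·)` is monotone and onto `ℝ`, hence continuous. For (i), as `θ → θ₀` the event
`G_S(U, θ) ≤ s` eventually agrees with `G_S(U, θ₀) ≤ s` off the null event `G_S(U, θ₀) = s`, so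
dominated convergence gives continuity of `F_S(s, ·)`. For (ii), each level set
`Q(s₀, u)` is an interval; if `Q⁺ ≠ Q⁻` it contains a rational `r`, i.e. `G_S(U*, r) = s₀`, and
this is a countable union of events which are null because `U*` and `U` share their law.
-/

open MeasureTheory Filter Set Topology

theorem continuous_measure_setOf_le {X Ω β : Type*} [TopologicalSpace X]
    [FirstCountableTopology X] [MeasurableSpace Ω] {μ : Measure Ω} [IsFiniteMeasure μ]
    [TopologicalSpace β] [LinearOrder β] [OrderClosedTopology β] [MeasurableSpace β]
    [OpensMeasurableSpace β] {f : X → Ω → β} {s : β} (hf_meas : ∀ x, Measurable (f x))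
    (hf_cont : ∀ ω, Continuous fun x => f x ω) (hnull : ∀ x, μ {ω | f x ω = s} = 0) :
    Continuous fun x => μ {ω | f x ω ≤ s} := by
  refine continuous_iff_continuousAt.2 fun x₀ => ?_
  refine tendsto_measure_of_ae_tendsto_indicator_of_isFiniteMeasure _
    (hf_meas x₀ measurableSet_Iic) (fun x => hf_meas x measurableSet_Iic) ?_
  refine measure_eq_zero_iff_ae_notMem.1 (hnull x₀) |>.mono fun ω hω => ?_
  have hlim := (hf_cont ω).tendsto x₀
  rcases lt_or_gt_of_ne (hω : f x₀ ω ≠ s) with hlt | hgt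
  · filter_upwards [hlim.eventually (isOpen_Iio.mem_nhds hlt)] with x hx
    exact iff_of_true (le_of_lt hx) hlt.le
  · filter_upwards [hlim.eventually (isOpen_Ioi.mem_nhds hgt)] with x hx
    exact iff_of_false (not_le.2 hx) (not_le.2 hgt)

theorem Set.OrdConnected.subsingleton_of_forall_rat_notMem {S : Set ℝ} (hS : S.OrdConnected)
    (hrat : ∀ q : ℚ, (q : ℝ) ∉ S) : S.Subsingleton := by
  intro a ha b hb
  by_contra hab
  wlog hlt : a < b generalizing a b
  · exact this hb ha (Ne.symm hab) ((Ne.symm hab).lt_of_le (not_lt.1 hlt))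
  obtain ⟨q, haq, hqb⟩ := exists_rat_btwn hlt
  exact hrat q (hS.out ha hb ⟨haq.le, hqb.le⟩)

theorem Set.Subsingleton.sSup_eq_sInf {α : Type*} [CompleteLattice α] {S : Set α}
    (hS : S.Subsingleton) (hne : S.Nonempty) : sSup S = sInf S := by
  obtain ⟨a, ha⟩ := hne
  rw [hS.eq_singleton_of_mem ha, sSup_singleton, sInf_singleton]

/-- If the inverse images are always nonempty and the distribution of
`G_S(U,θ)` is atomless for every `θ`, then (i) `θ ↦ F_S(s,θ)` is continuous for every `s`, and
(ii) for each `s₀`, `Q⁺_{s₀}(U*) = Q⁻_{s₀}(U*)` with probability 1. -/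
theorem fiducial_continuity_and_sup_eq_inf
    {M Ω : Type*} [MeasurableSpace M] [MeasurableSpace Ω]
    (P : Measure Ω) [IsProbabilityMeasure P]
    (U Ustar : Ω → M) (hU : Measurable U) (hUstar : Measurable Ustar)
    (hdist : Measure.map Ustar P = Measure.map U P)
    (GS : M → ℝ → ℝ) (hGS : Measurable (Function.uncurry GS))
    (hmono : ∀ u : M, Monotone (GS u))
    (hne : ∀ (u : M) (s : ℝ), {θ : ℝ | GS u θ = s}.Nonempty)
    (hatomless : ∀ θ s : ℝ, P {ω : Ω | GS (U ω) θ = s} = 0) :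
    (∀ s : ℝ, Continuous (fun θ : ℝ => (P {ω : Ω | GS (U ω) θ ≤ s}).toReal)) ∧
    (∀ s₀ : ℝ,
      P {ω : Ω | sSup (Real.toEReal '' {θ : ℝ | GS (Ustar ω) θ = s₀})
          = sInf (Real.toEReal '' {θ : ℝ | GS (Ustar ω) θ = s₀})} = 1) := by
  have hcont (u : M) : Continuous (GS u) := (hmono u).continuous_of_surjective (hne u)
  have hsection (θ : ℝ) : Measurable fun u => GS u θ := hGS.of_uncurry_right
  refine ⟨fun s => ?_, fun s₀ => ?_⟩
  · exact ENNReal.continuousOn_toReal.comp_continuous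
      (continuous_measure_setOf_le (fun θ => (hsection θ).comp hU)
        (fun ω => hcont (U ω)) (fun θ => hatomless θ s))
      fun θ => measure_ne_top P _
  · have hident : ProbabilityTheory.IdentDistrib Ustar U P P :=
      ⟨hUstar.aemeasurable, hU.aemeasurable, hdist⟩
    have hrat_null : ∀ᵐ ω ∂P, ∀ q : ℚ, GS (Ustar ω) q ≠ s₀ := by
      refine ae_all_iff.2 fun q => measure_eq_zero_iff_ae_notMem.1 ?_
      rw [← hatomless q s₀]
      exact hident.measure_mem_eq ((hsection q) (measurableSet_singleton s₀))
    rw [← measure_univ (μ := P)]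
    refine measure_congr (ae_eq_univ.2 (measure_eq_zero_iff_ae_notMem.2 ?_))
    filter_upwards [hrat_null] with ω hω
    have hlevel : {θ : ℝ | GS (Ustar ω) θ = s₀}.Subsingleton :=
      (ordConnected_singleton.preimage_mono (hmono _)).subsingleton_of_forall_rat_notMem hω
    exact not_not.2 <| (hlevel.image _).sSup_eq_sInf
      ((hne (Ustar ω) s₀).image _)
end

section
/- Assume Q(s,u) ≠ ∅ for every u ∈ M and every s ∈ ℝ, and assume additionally that P(G_S(U,θ) = s) = 0 for all θ, s ∈ ℝ. Then for all s₀, θ₀ ∈ ℝ the generalized fiducial distribution based on this data generating equation is exact at the level of its distribution function: P(Q⁺_{s₀}(U*) ≤ θ₀) = 1 − F_S(s₀, θ₀) (and the same identity holds with Q⁻ in place of Q⁺). -/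
open MeasureTheory Filter Set Topology

lemma fiducial_aux_sup {M : Type*} (GS : M → ℝ → ℝ) (hmono : ∀ u : M, Monotone (GS u))
    (hne : ∀ (u : M) (s : ℝ), {θ : ℝ | GS u θ = s}.Nonempty) (u : M) (s₀ θ₀ : ℝ)
    (h : GS u θ₀ ≠ s₀) :
    (sSup (Real.toEReal '' {θ : ℝ | GS u θ = s₀}) ≤ (θ₀ : EReal)) ↔ s₀ < GS u θ₀ := by
  constructor
  · intro hle
    rcases lt_trichotomy (GS u θ₀) s₀ with hlt | heq | hgt
    · obtain ⟨θ, hθ⟩ := hne u s₀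
      have hθθ₀ : θ₀ < θ := by
        by_contra hc
        push_neg at hc
        have := hmono u hc
        rw [Set.mem_setOf_eq] at hθ
        rw [hθ] at this
        linarith
      have h1 : (θ : EReal) ≤ sSup (Real.toEReal '' {θ : ℝ | GS u θ = s₀}) :=
        le_sSup (Set.mem_image_of_mem _ hθ)
      have h2 : (θ : EReal) ≤ (θ₀ : EReal) := h1.trans hle
      rw [EReal.coe_le_coe_iff] at h2
      linarith
    · exact absurd heq h
    · exact hgt
  · intro hgt
    apply sSup_le
    rintro x ⟨θ, hθ, rfl⟩
    rw [Set.mem_setOf_eq] at hθ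
    have : θ ≤ θ₀ := by
      by_contra hc
      push_neg at hc
      have := hmono u hc.le
      rw [hθ] at this
      linarith
    exact EReal.coe_le_coe_iff.mpr this

lemma fiducial_aux_inf {M : Type*} (GS : M → ℝ → ℝ) (hmono : ∀ u : M, Monotone (GS u))
    (hne : ∀ (u : M) (s : ℝ), {θ : ℝ | GS u θ = s}.Nonempty) (u : M) (s₀ θ₀ : ℝ)
    (h : GS u θ₀ ≠ s₀) (hq : ∀ q : ℚ, GS u (q : ℝ) ≠ s₀) :
    (sInf (Real.toEReal '' {θ : ℝ | GS u θ = s₀}) ≤ (θ₀ : EReal)) ↔ s₀ < GS u θ₀ := by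
  constructor
  · intro hle
    rcases lt_trichotomy (GS u θ₀) s₀ with hlt | heq | hgt
    · obtain ⟨θ, hθ⟩ := hne u s₀
      rw [Set.mem_setOf_eq] at hθ
      have hθθ₀ : θ₀ < θ := by
        by_contra hc
        push_neg at hc
        have := hmono u hc
        rw [hθ] at this
        linarith
      obtain ⟨q, hq1, hq2⟩ := exists_rat_btwn hθθ₀
      have hlt' : sInf (Real.toEReal '' {θ : ℝ | GS u θ = s₀}) < ((q : ℝ) : EReal) :=
        lt_of_le_of_lt hle (EReal.coe_lt_coe_iff.mpr hq1)
      rw [sInf_lt_iff] at hlt'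
      obtain ⟨x, hx, hxq⟩ := hlt'
      obtain ⟨θ', hθ', rfl⟩ := hx
      rw [Set.mem_setOf_eq] at hθ'
      rw [EReal.coe_lt_coe_iff] at hxq
      have h1 : GS u (q : ℝ) ≤ GS u θ := hmono u hq2.le
      have h2 : GS u θ' ≤ GS u (q : ℝ) := hmono u hxq.le
      rw [hθ, hθ'] at *
      exact absurd (le_antisymm h1 h2) (hq q)
    · exact absurd heq h
    · exact hgt
  · intro hgt
    obtain ⟨θ, hθ⟩ := hne u s₀
    rw [Set.mem_setOf_eq] at hθ
    have hθθ₀ : θ ≤ θ₀ := by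
      by_contra hc
      push_neg at hc
      have := hmono u hc.le
      rw [hθ] at this
      linarith
    exact le_trans (sInf_le (Set.mem_image_of_mem _ hθ)) (EReal.coe_le_coe_iff.mpr hθθ₀)

/-- If the inverse images are always nonempty and the distribution of
`G_S(U,θ)` is atomless for every `θ`, then the GFD is exact:
`P(Q⁺_{s₀}(U*) ≤ θ₀) = 1 − F_S(s₀,θ₀)`, and the same with `Q⁻` in place of `Q⁺`. -/
theorem fiducial_exactness
    {M Ω : Type*} [MeasurableSpace M] [MeasurableSpace Ω]
    (P : Measure Ω) [IsProbabilityMeasure P]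
    (U Ustar : Ω → M) (hU : Measurable U) (hUstar : Measurable Ustar)
    (hdist : Measure.map Ustar P = Measure.map U P)
    (GS : M → ℝ → ℝ) (hGS : Measurable (Function.uncurry GS))
    (hmono : ∀ u : M, Monotone (GS u))
    (hne : ∀ (u : M) (s : ℝ), {θ : ℝ | GS u θ = s}.Nonempty)
    (hatomless : ∀ θ s : ℝ, P {ω : Ω | GS (U ω) θ = s} = 0) :
    ∀ s₀ θ₀ : ℝ,
      (P {ω : Ω | sSup (Real.toEReal '' {θ : ℝ | GS (Ustar ω) θ = s₀}) ≤ (θ₀ : EReal)}).toReal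
        = 1 - (P {ω : Ω | GS (U ω) θ₀ ≤ s₀}).toReal ∧
      (P {ω : Ω | sInf (Real.toEReal '' {θ : ℝ | GS (Ustar ω) θ = s₀}) ≤ (θ₀ : EReal)}).toReal
        = 1 - (P {ω : Ω | GS (U ω) θ₀ ≤ s₀}).toReal := by
  intro s₀ θ₀
  have hGSm : ∀ θ : ℝ, Measurable (fun u => GS u θ) := by
    intro θ
    have : (fun u => GS u θ) = Function.uncurry GS ∘ (fun u => (u, θ)) := rfl
    rw [this]
    exact hGS.comp (measurable_id.prodMk measurable_const)
  have hnull : ∀ θ s : ℝ, P {ω | GS (Ustar ω) θ = s} = 0 := by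
    intro θ s
    have hms : MeasurableSet {u : M | GS u θ = s} :=
      measurableSet_eq_fun (hGSm θ) measurable_const
    have h1 : P {ω | GS (Ustar ω) θ = s} = Measure.map Ustar P {u | GS u θ = s} := by
      rw [Measure.map_apply hUstar hms]; rfl
    rw [h1, hdist, Measure.map_apply hU hms]
    exact hatomless θ s
  set N : Set Ω := {ω | GS (Ustar ω) θ₀ = s₀} ∪ ⋃ q : ℚ, {ω | GS (Ustar ω) (q : ℝ) = s₀} with hNdef
  have hN : P N = 0 :=
    measure_union_null (hnull θ₀ s₀) (measure_iUnion_null fun q => hnull (q : ℝ) s₀)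
  have hNae : ∀ᵐ ω ∂P, ω ∉ N := by
    rw [ae_iff]
    have : {ω | ¬ ω ∉ N} = N := by ext ω; simp
    rw [this]
    exact hN
  -- the key probability computation
  have hmsM : MeasurableSet {u : M | s₀ < GS u θ₀} :=
    measurableSet_lt measurable_const (hGSm θ₀)
  have hkey : (P {ω | s₀ < GS (Ustar ω) θ₀}).toReal
      = 1 - (P {ω : Ω | GS (U ω) θ₀ ≤ s₀}).toReal := by
    have h1 : P {ω | s₀ < GS (Ustar ω) θ₀} = Measure.map Ustar P {u | s₀ < GS u θ₀} := by
      rw [Measure.map_apply hUstar hmsM]; rfl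
    have h2 : Measure.map U P {u | s₀ < GS u θ₀} = P {ω | s₀ < GS (U ω) θ₀} := by
      rw [Measure.map_apply hU hmsM]; rfl
    have h3 : {ω | s₀ < GS (U ω) θ₀} = {ω : Ω | GS (U ω) θ₀ ≤ s₀}ᶜ := by
      ext ω; simp [not_le]
    have hmsΩ : MeasurableSet {ω : Ω | GS (U ω) θ₀ ≤ s₀} :=
      measurableSet_le ((hGSm θ₀).comp hU) measurable_const
    rw [h1, hdist, h2, h3, measure_compl hmsΩ (measure_ne_top P _), measure_univ]
    rw [ENNReal.toReal_sub_of_le prob_le_one ENNReal.one_ne_top, ENNReal.toReal_one]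
  constructor
  · have hcong : P {ω : Ω | sSup (Real.toEReal '' {θ : ℝ | GS (Ustar ω) θ = s₀}) ≤ (θ₀ : EReal)}
        = P {ω | s₀ < GS (Ustar ω) θ₀} := by
      apply measure_congr
      rw [eventuallyEq_set]
      filter_upwards [hNae] with ω hω
      have h1 : GS (Ustar ω) θ₀ ≠ s₀ := fun hc => hω (Or.inl hc)
      exact fiducial_aux_sup GS hmono hne _ s₀ θ₀ h1
    rw [hcong, hkey]
  · have hcong : P {ω : Ω | sInf (Real.toEReal '' {θ : ℝ | GS (Ustar ω) θ = s₀}) ≤ (θ₀ : EReal)}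
        = P {ω | s₀ < GS (Ustar ω) θ₀} := by
      apply measure_congr
      rw [eventuallyEq_set]
      filter_upwards [hNae] with ω hω
      have h1 : GS (Ustar ω) θ₀ ≠ s₀ := fun hc => hω (Or.inl hc)
      have h2 : ∀ q : ℚ, GS (Ustar ω) (q : ℝ) ≠ s₀ := fun q hc =>
        hω (Or.inr (Set.mem_iUnion.mpr ⟨q, hc⟩))
      exact fiducial_aux_inf GS hmono hne _ s₀ θ₀ h1 h2
    rw [hcong, hkey]
end

section
/- Assume Q(s,u) ≠ ∅ for every u ∈ M and every s ∈ ℝ, and let α ∈ (0,1). Define the extended-real-valued upper fiducial confidence bound C⁺_α(s) := sup{c ∈ ℝ : P(Q⁺_s(U*) < c) ≤ 1−α}. Then s ↦ C⁺_α(s) is nondecreasing (hence measurable), and for every θ ∈ ℝ the coverage of the one-sided upper confidence bound is at least the nominal level: P( θ ≤ C⁺_α(G_S(U,θ)) ) ≥ 1 − α. -/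
open MeasureTheory Set

open scoped ENNReal

/-!
Miscoverage at `θ` means `C⁺_α(s) < θ` for `s = G_S(U, θ)`. Then `θ` is not admissible in the
supremum defining `C⁺_α(s)`, so `Q⁺_s(U*) < θ` with probability above `1 - α`; since
`G_S(U*, ·)` is monotone and takes the value `s`, this forces `s < G_S(U*, θ)`, and as `U*` has
the law of `U`, the distribution function `F` of `X = G_S(U, θ)` satisfies `F(s) < α`. Hence
miscoverage implies `F(X) < α`, an event of probability at most `α` for every real random
variable: a compact subset of `{F < α}` lies below its maximum `m`, so has mass at most
`F(m) < α`, and inner regularity of the law of `X` concludes.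
-/

theorem measurableSet_setOf_measure_Iic_lt (μ : Measure ℝ) (a : ℝ≥0∞) :
    MeasurableSet {x | μ (Iic x) < a} :=
  Monotone.measurable (fun _ _ h => measure_mono (Iic_subset_Iic.mpr h)) measurableSet_Iio

theorem measure_setOf_measure_Iic_lt_le (μ : Measure ℝ) [SigmaFinite μ] (a : ℝ≥0∞) :
    μ {x | μ (Iic x) < a} ≤ a := by
  have hmeas := measurableSet_setOf_measure_Iic_lt μ a
  by_contra! hlt
  obtain ⟨K, hKA, hK, haK⟩ := hmeas.exists_lt_isCompact hlt
  have hKne : K.Nonempty := nonempty_iff_ne_empty.mpr fun h => by simp [h] at haK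
  have hmax : sSup K ∈ K := hK.sSup_mem hKne
  have hKmax : μ K ≤ μ (Iic (sSup K)) := measure_mono fun _ => le_csSup hK.bddAbove
  exact hKmax.not_gt ((hKA hmax).trans haK)

/-- `levelSup (G_S u) s` is `Q⁺_s(u)`. -/
noncomputable def levelSup (f : ℝ → ℝ) (s : ℝ) : EReal := sSup (Real.toEReal '' {θ | f θ = s})

section levelSup

variable {f : ℝ → ℝ} {s θ : ℝ}

theorem le_levelSup_of_le (hf : Monotone f) (hs : s ∈ range f) (h : f θ ≤ s) :
    (θ : EReal) ≤ levelSup f s := by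
  obtain ⟨θ₀, hθ₀⟩ := hs
  rcases le_total θ θ₀ with hle | hlt
  · exact (EReal.coe_le_coe_iff.mpr hle).trans (le_sSup ⟨θ₀, hθ₀, rfl⟩)
  · exact le_sSup ⟨θ, le_antisymm h (hθ₀ ▸ hf hlt), rfl⟩

theorem lt_of_levelSup_lt (hf : Monotone f) (hs : s ∈ range f) (h : levelSup f s < θ) :
    s < f θ :=
  lt_of_not_ge fun hle => (le_levelSup_of_le hf hs hle).not_gt h

theorem levelSup_mono (hf : Monotone f) (hsurj : Function.Surjective f) : Monotone (levelSup f) :=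
  fun _ s' hss' => sSup_le <| by
    rintro _ ⟨θ, rfl, rfl⟩
    exact le_levelSup_of_le hf (hsurj s') hss'

end levelSup

section Probability

variable {Ω : Type*} [MeasurableSpace Ω] (P : Measure Ω)

theorem measure_setOf_map_Iic_lt_le [IsFiniteMeasure P] {X : Ω → ℝ} (hX : Measurable X)
    (a : ℝ≥0∞) : P {ω | P.map X (Iic (X ω)) < a} ≤ a :=
  (Measure.map_apply hX (measurableSet_setOf_measure_Iic_lt _ a)).symm.trans_le
    (measure_setOf_measure_Iic_lt_le _ a)

theorem monotone_sSup_setOf_measure_lt_le [IsFiniteMeasure P] {q : ℝ → Ω → EReal}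
    (hq : ∀ ω, Monotone fun s => q s ω) (β : ℝ) :
    Monotone fun s => sSup (Real.toEReal '' {c : ℝ | (P {ω | q s ω < c}).toReal ≤ β}) :=
  fun _ _ h => sSup_le_sSup <| image_mono fun _ hc =>
    (ENNReal.toReal_mono (measure_ne_top P _) (measure_mono fun ω hω => (hq ω h).trans_lt hω)).trans
      hc

theorem map_Iic_lt_of_sSup_lt [IsProbabilityMeasure P] {q : Ω → EReal} {Y : Ω → ℝ}
    (hY : Measurable Y) {s θ α : ℝ} (hqY : ∀ ω, q ω < θ → s < Y ω)
    (h : sSup (Real.toEReal '' {c : ℝ | (P {ω | q ω < c}).toReal ≤ 1 - α}) < θ) :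
    P.map Y (Iic s) < ENNReal.ofReal α := by
  have : IsProbabilityMeasure (P.map Y) := Measure.isProbabilityMeasure_map hY.aemeasurable
  have hq : 1 - α < (P {ω | q ω < θ}).toReal :=
    not_le.mp fun hle => h.not_ge (le_sSup ⟨θ, hle, rfl⟩)
  have hqs : (P {ω | q ω < θ}).toReal ≤ (P.map Y (Ioi s)).toReal :=
    ENNReal.toReal_mono (measure_ne_top _ _) <| by
      rw [Measure.map_apply hY measurableSet_Ioi]; exact measure_mono hqY
  rw [ENNReal.lt_ofReal_iff_toReal_lt (measure_ne_top _ _), ← compl_Ioi,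
    prob_compl_eq_one_sub measurableSet_Ioi, ENNReal.toReal_sub_of_le prob_le_one ENNReal.one_ne_top,
    ENNReal.toReal_one]
  linarith

end Probability

/-- the upper fiducial confidence bound
`C⁺_α(s) = sup{c : P(Q⁺_s(U*) < c) ≤ 1−α}` is nondecreasing in `s` and has one-sided
frequentist coverage at least `1 − α`. -/
theorem fiducial_upper_confidence_bound
    {M Ω : Type*} [MeasurableSpace M] [MeasurableSpace Ω]
    (P : Measure Ω) [IsProbabilityMeasure P]
    (U Ustar : Ω → M) (hU : Measurable U) (hUstar : Measurable Ustar)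
    (hdist : Measure.map Ustar P = Measure.map U P)
    (GS : M → ℝ → ℝ) (hGS : Measurable (Function.uncurry GS))
    (hmono : ∀ u : M, Monotone (GS u))
    (hne : ∀ (u : M) (s : ℝ), {θ : ℝ | GS u θ = s}.Nonempty)
    (α : ℝ) (hα : α ∈ Set.Ioo (0 : ℝ) 1)
    (Cplus : ℝ → EReal)
    (hC : ∀ s : ℝ, Cplus s = sSup (Real.toEReal ''
      {c : ℝ | (P {ω : Ω | sSup (Real.toEReal '' {θ : ℝ | GS (Ustar ω) θ = s})
        < (c : EReal)}).toReal ≤ 1 - α})) :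
    Monotone Cplus ∧
    ∀ θ : ℝ, 1 - α ≤ (P {ω : Ω | (θ : EReal) ≤ Cplus (GS (U ω) θ)}).toReal := by
  have hCmono : Monotone Cplus := by
    convert monotone_sSup_setOf_measure_lt_le P
      (fun ω => levelSup_mono (hmono (Ustar ω)) (hne (Ustar ω))) (1 - α) using 1
    exact funext hC
  refine ⟨hCmono, fun θ => ?_⟩
  have hG : Measurable fun u => GS u θ := hGS.comp (measurable_id.prodMk measurable_const)
  have hX : Measurable fun ω => GS (U ω) θ := hG.comp hU
  have hlaw : P.map (fun ω => GS (Ustar ω) θ) = P.map (fun ω => GS (U ω) θ) := by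
    have := congrArg (Measure.map fun u => GS u θ) hdist
    rwa [Measure.map_map hG hUstar, Measure.map_map hG hU] at this
  have hbad : P {ω | Cplus (GS (U ω) θ) < θ} ≤ ENNReal.ofReal α := by
    refine (measure_mono fun ω (hω : Cplus _ < θ) => ?_).trans
      (measure_setOf_map_Iic_lt_le P hX _)
    rw [hC] at hω
    rw [← hlaw]
    exact map_Iic_lt_of_sSup_lt P (hG.comp hUstar)
      (fun ω' => lt_of_levelSup_lt (hmono _) (hne _ _)) hω
  have hgood : {ω | (θ : EReal) ≤ Cplus (GS (U ω) θ)} = {ω | Cplus (GS (U ω) θ) < θ}ᶜ := by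
    simp only [compl_ofPred, not_lt]
  have hbadm : MeasurableSet {ω | Cplus (GS (U ω) θ) < θ} :=
    measurableSet_lt (hCmono.measurable.comp hX) measurable_const
  rw [hgood, prob_compl_eq_one_sub hbadm,
    ENNReal.toReal_sub_of_le prob_le_one ENNReal.one_ne_top, ENNReal.toReal_one]
  linarith [ENNReal.toReal_le_of_le_ofReal hα.1.le hbad]
end

section
/- Assume Q(s,u) ≠ ∅ for every u ∈ M and every s ∈ ℝ, and let α ∈ (0,1). Define the extended-real-valued lower fiducial confidence bound C⁻_α(s) := inf{c ∈ ℝ : P(Q⁻_s(U*) > c) ≤ 1−α}. Then s ↦ C⁻_α(s) is nondecreasing (hence measurable), and for every θ ∈ ℝ the coverage of the one-sided lower confidence bound is at least the nominal level: P( θ ≥ C⁻_α(G_S(U,θ)) ) ≥ 1 − α. -/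
/-!
Monotonicity of `θ ↦ G_S(u, θ)` makes `Q⁻_s(u)` nondecreasing in `s`, hence so is the fiducial
survival function `s ↦ P(Q⁻_s(U*) > c)`, and the sublevel sets defining `C⁻_α(s)` shrink as `s`
grows.

For coverage fix `θ` and let `D = {s | P(Q⁻_s(U*) > θ) ≤ 1 - α}`: a lower set on which
`C⁻_α ≤ θ`. Since `Q⁻_s(u) > θ` forces `G_S(u, θ) < s`, and `U`, `U*` have the same law, every
`s ∉ D` has `P(G_S(U, θ) < s) > 1 - α`. For a real random variable `X` and a lower set `D` this
gives `P(X ∈ D) ≥ 1 - α`: `D` is `∅`, `ℝ`, `Iio s₀` or `Iic s₀`, and the last case follows from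
continuity of `s ↦ P(X < s)` from the right at `s₀`.
-/

open MeasureTheory Filter Set Topology ProbabilityTheory
open scoped ENNReal

/-- `Q⁻_s(u) = levelInf (G_S u) s`. -/
noncomputable def levelInf (f : ℝ → ℝ) (s : ℝ) : EReal :=
  sInf (Real.toEReal '' {θ : ℝ | f θ = s})

section levelInf

variable {f : ℝ → ℝ}

theorem levelInf_le_of_eq {s θ : ℝ} (h : f θ = s) : levelInf f s ≤ θ :=
  sInf_le (mem_image_of_mem _ h)

theorem levelInf_le_of_le (hf : Monotone f) {s t : ℝ} (hs : s ∈ range f) (hst : s ≤ f t) :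
    levelInf f s ≤ t := by
  obtain ⟨θ, hθ⟩ := hs
  rcases le_or_gt θ t with hθt | htθ
  · exact (levelInf_le_of_eq hθ).trans (EReal.coe_le_coe_iff.mpr hθt)
  · exact levelInf_le_of_eq (le_antisymm (hθ ▸ hf htθ.le) hst)

theorem lt_of_lt_levelInf (hf : Monotone f) {s t : ℝ} (hs : s ∈ range f)
    (h : (t : EReal) < levelInf f s) : f t < s :=
  lt_of_not_ge fun hle => (levelInf_le_of_le hf hs hle).not_gt h

theorem levelInf_mono (hf : Monotone f) (hsurj : Function.Surjective f) :
    Monotone (levelInf f) := by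
  intro s s' hss'
  refine le_sInf ?_
  rintro _ ⟨t, ht, rfl⟩
  exact levelInf_le_of_le hf (hsurj s) (hss'.trans_eq ht.symm)

end levelInf

theorem le_measure_of_isLowerSet {μ : Measure ℝ} [IsFiniteMeasure μ] {D : Set ℝ}
    (hD : IsLowerSet D) {a : ℝ≥0∞} (ha : a ≤ μ univ) (h : ∀ x ∉ D, a ≤ μ (Iio x)) :
    a ≤ μ D := by
  by_cases hbdd : BddAbove D
  swap
  · have hD_univ : D = univ := eq_univ_of_forall fun x =>
      let ⟨_, hy, hxy⟩ := not_bddAbove_iff.1 hbdd x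
      hD hxy.le hy
    rwa [hD_univ]
  rcases D.eq_empty_or_nonempty with rfl | hne
  · have hlim : Tendsto (fun x => μ (Iio x)) atBot (𝓝 (μ (⋂ x, Iio x))) :=
      tendsto_measure_iInter_atBot (fun _ => measurableSet_Iio.nullMeasurableSet)
        (fun _ _ => Iio_subset_Iio) ⟨0, measure_ne_top _ _⟩
    have hempty : ⋂ x : ℝ, Iio x = ∅ := iInter_eq_empty_iff.2 fun x => ⟨x, lt_irrefl x⟩
    simpa [hempty] using ge_of_tendsto' hlim fun x => h x (notMem_empty x)
  by_cases hs : sSup D ∈ D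
  · have hlim : Tendsto (fun x => μ (Iio x)) (𝓝[>] sSup D) (𝓝 (μ (⋂ r > sSup D, Iio r))) :=
      tendsto_measure_biInter_gt (fun _ _ => measurableSet_Iio.nullMeasurableSet)
        (fun _ _ _ => Iio_subset_Iio) ⟨sSup D + 1, by simp, measure_ne_top _ _⟩
    have hle : a ≤ μ (⋂ r > sSup D, Iio r) :=
      ge_of_tendsto hlim (eventually_nhdsWithin_of_forall fun r hr =>
        h r (notMem_of_csSup_lt hr hbdd))
    refine hle.trans (measure_mono fun y hy => hD ?_ hs)
    exact le_of_forall_gt fun r hr => mem_iInter₂.1 hy r hr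
  · refine (h _ hs).trans (measure_mono fun y hy => ?_)
    obtain ⟨d, hd, hyd⟩ := exists_lt_of_lt_csSup hne hy
    exact hD hyd.le hd

theorem le_measure_preimage_of_isLowerSet {Ω : Type*} [MeasurableSpace Ω] {P : Measure Ω}
    [IsFiniteMeasure P] {X : Ω → ℝ} (hX : Measurable X) {D : Set ℝ} (hD : IsLowerSet D)
    {a : ℝ≥0∞} (ha : a ≤ P univ) (h : ∀ x ∉ D, a ≤ P (X ⁻¹' Iio x)) : a ≤ P (X ⁻¹' D) := by
  have hmap := le_measure_of_isLowerSet (μ := P.map X) (a := a) hD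
    (by rwa [Measure.map_apply hX MeasurableSet.univ])
    (fun x hx => by rw [Measure.map_apply hX measurableSet_Iio]; exact h x hx)
  rwa [Measure.map_apply hX hD.ordConnected.measurableSet] at hmap

/-- the lower fiducial confidence bound
`C⁻_α(s) = inf{c : P(Q⁻_s(U*) > c) ≤ 1−α}` is nondecreasing in `s` and has one-sided
frequentist coverage at least `1 − α`. -/
theorem fiducial_lower_confidence_bound
    {M Ω : Type*} [MeasurableSpace M] [MeasurableSpace Ω]
    (P : Measure Ω) [IsProbabilityMeasure P]
    (U Ustar : Ω → M) (hU : Measurable U) (hUstar : Measurable Ustar)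
    (hdist : Measure.map Ustar P = Measure.map U P)
    (GS : M → ℝ → ℝ) (hGS : Measurable (Function.uncurry GS))
    (hmono : ∀ u : M, Monotone (GS u))
    (hne : ∀ (u : M) (s : ℝ), {θ : ℝ | GS u θ = s}.Nonempty)
    (α : ℝ) (hα : α ∈ Set.Ioo (0 : ℝ) 1)
    (Cminus : ℝ → EReal)
    (hC : ∀ s : ℝ, Cminus s = sInf (Real.toEReal ''
      {c : ℝ | (P {ω : Ω | (c : EReal)
        < sInf (Real.toEReal '' {θ : ℝ | GS (Ustar ω) θ = s})}).toReal ≤ 1 - α})) :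
    Monotone Cminus ∧
    ∀ θ : ℝ, 1 - α ≤ (P {ω : Ω | Cminus (GS (U ω) θ) ≤ (θ : EReal)}).toReal := by
  have hsurv : ∀ c : EReal,
      Monotone fun s => (P {ω | c < levelInf (GS (Ustar ω)) s}).toReal :=
    fun c s s' hss' => ENNReal.toReal_mono (measure_ne_top _ _) (measure_mono fun ω hω =>
      hω.trans_le (levelInf_mono (hmono _) (hne _) hss'))
  refine ⟨fun s s' hss' => ?_, fun θ => ?_⟩
  · rw [hC, hC]
    exact sInf_le_sInf (image_mono fun c hc => (hsurv c hss').trans hc)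
  have hX : Measurable fun u => GS u θ := hGS.comp (measurable_id.prodMk measurable_const)
  have hident : IdentDistrib ((fun u => GS u θ) ∘ U) ((fun u => GS u θ) ∘ Ustar) P P :=
    (⟨hU.aemeasurable, hUstar.aemeasurable, hdist.symm⟩ : IdentDistrib U Ustar P P).comp hX
  have hcover := le_measure_preimage_of_isLowerSet (P := P) (hX.comp hU)
    ((isLowerSet_Iic (1 - α)).preimage (hsurv θ)) (a := ENNReal.ofReal (1 - α))
    (by simpa using hα.1.le) fun s hs => ?_
  · rw [ENNReal.ofReal_le_iff_le_toReal (measure_ne_top _ _)] at hcover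
    refine hcover.trans (ENNReal.toReal_mono (measure_ne_top _ _) (measure_mono fun ω hω => ?_))
    exact (hC _).trans_le (sInf_le (mem_image_of_mem _ hω))
  · rw [hident.measure_mem_eq measurableSet_Iio]
    refine (ENNReal.ofReal_le_of_le_toReal (not_le.1 hs).le).trans
      (measure_mono fun ω hω => lt_of_lt_levelInf (hmono _) (hne _ _) hω)
end

section
/- (Conditional version of the exactness theorem given an ancillary statistic.) Fix s₀, θ₀ ∈ ℝ. Suppose G_S(u,θ) := S(G(u,θ)) is nondecreasing in θ for every u, that Q(s,u) := {θ ∈ ℝ : G_S(u,θ) = s} is nonempty for every u and s, and let Q⁺_s(u) := sup Q(s,u). Let ν denote the law of the ancillary statistic G_A(U), and for a in the range of G_A let μ_a be a regular conditional distribution (conditional kernel) of U given G_A(U) = a, and let F_{S|a}(s, θ₀) := μ_a({u : G_S(u,θ₀) ≤ s}) be the corresponding conditional distribution function of G_S(U,θ₀) given G_A(U) = a. Then for ν-almost every a, μ_a({u : Q⁺_{s₀}(u) ≤ θ₀}) = 1 − lim_{ε↓0} F_{S|a}(s₀, θ₀ + ε); in particular, if additionally μ_a({u : G_S(u,θ)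 = s}) = 0 for all θ, s and ν-a.e. a, then for ν-almost every a the conditional fiducial distribution is exact: μ_a({u : Q⁺_{s₀}(u) ≤ θ₀}) = 1 − F_{S|a}(s₀, θ₀). -/
open MeasureTheory Filter Set Topology ProbabilityTheory

/-!
Since `θ ↦ G_S(u, θ)` is monotone and hits `s₀`, `Q⁺_{s₀}(u) ≤ θ₀` holds exactly when
`s₀ < G_S(u, θ)` for every `θ > θ₀`. These events decrease as `θ ↓ θ₀`, so by continuity of
measure from above the probability of `{Q⁺_{s₀} ≤ θ₀}` is the right limit of `1 - F_S(s₀, ·)`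
at `θ₀`. This holds for every probability measure on `M`, in particular for each conditional
law `μ_a`. If `μ_a` puts no mass on `{G_S(·, θ₀) = s₀}`, the right limit may be replaced by
the value at `θ₀`.
-/

/-- `Q⁺_s` of the paper, for the single map `f = G_S(u, ·)`. -/
noncomputable def fiducialSup (f : ℝ → ℝ) (s : ℝ) : EReal :=
  sSup (Real.toEReal '' {θ | f θ = s})

section LevelSet

variable {f : ℝ → ℝ} {s θ₀ : ℝ}

theorem fiducialSup_le_iff (hf : Monotone f) (hne : {θ | f θ = s}.Nonempty) :
    fiducialSup f s ≤ θ₀ ↔ ∀ θ, θ₀ < θ → s < f θ := by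
  simp only [fiducialSup, sSup_le_iff, forall_mem_image, mem_ofPred_eq, EReal.coe_le_coe_iff]
  constructor
  · intro h θ hθ
    obtain ⟨θ₁, hθ₁⟩ := hne
    refine lt_of_le_of_ne (hθ₁ ▸ hf ((h hθ₁).trans hθ.le)) fun hs => ?_
    exact absurd (h hs.symm) (not_le.2 hθ)
  · intro h θ hθ
    by_contra! hlt
    exact (h θ hlt).ne' hθ

theorem le_of_fiducialSup_le (hf : Monotone f) (hne : {θ | f θ = s}.Nonempty)
    (h : fiducialSup f s ≤ θ₀) : s ≤ f θ₀ := by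
  obtain ⟨θ₁, hθ₁⟩ := hne
  have hθ₁_le : (θ₁ : EReal) ≤ θ₀ := (le_sSup (mem_image_of_mem _ hθ₁)).trans h
  exact hθ₁ ▸ hf (EReal.coe_le_coe_iff.1 hθ₁_le)

end LevelSet

section Exactness

variable {M : Type*} [MeasurableSpace M] (μ : Measure M) [IsProbabilityMeasure μ]
  {g : M → ℝ → ℝ}

theorem tendsto_measureReal_le_nhdsGT (hg : ∀ θ, Measurable (g · θ))
    (hmono : ∀ u, Monotone (g u)) (s θ₀ : ℝ) :
    Tendsto (fun θ => μ.real {u | g u θ ≤ s}) (𝓝[>] θ₀)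
      (𝓝 (1 - μ.real {u | ∀ θ, θ₀ < θ → s < g u θ})) := by
  have hinter : {u | ∀ θ, θ₀ < θ → s < g u θ} = ⋂ θ > θ₀, {u | s < g u θ} := by
    ext u; simp
  have hlt : Tendsto (fun θ => μ {u | s < g u θ}) (𝓝[>] θ₀)
      (𝓝 (μ {u | ∀ θ, θ₀ < θ → s < g u θ})) := by
    rw [hinter]
    exact tendsto_measure_biInter_gt
      (fun θ _ => (measurableSet_lt measurable_const (hg θ)).nullMeasurableSet)
      (fun θ θ' _ hθθ' u hu => hu.trans_le (hmono u hθθ'))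
      ⟨θ₀ + 1, lt_add_one θ₀, measure_ne_top _ _⟩
  have hcompl : ∀ θ, μ.real {u | g u θ ≤ s} = 1 - μ.real {u | s < g u θ} := fun θ => by
    rw [← probReal_compl_eq_one_sub (measurableSet_lt measurable_const (hg θ))]
    simp only [compl_ofPred, not_lt]
  simp only [hcompl]
  exact ((ENNReal.tendsto_toReal (measure_ne_top _ _)).comp hlt).const_sub 1

theorem tendsto_measureReal_le_fiducialSup (hg : ∀ θ, Measurable (g · θ))
    (hmono : ∀ u, Monotone (g u)) (hne : ∀ u s, {θ | g u θ = s}.Nonempty) (s θ₀ : ℝ) :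
    Tendsto (fun ε => μ.real {u | g u (θ₀ + ε) ≤ s}) (𝓝[>] 0)
      (𝓝 (1 - μ.real {u | fiducialSup (g u) s ≤ θ₀})) := by
  have hshift : Tendsto (θ₀ + ·) (𝓝[>] 0) (𝓝[>] θ₀) := by
    have := (map_add_left_nhdsGT (c := θ₀) (a := (0 : ℝ))).le
    rwa [add_zero] at this
  simp only [fiducialSup_le_iff (hmono _) (hne _ _)]
  exact (tendsto_measureReal_le_nhdsGT μ hg hmono s θ₀).comp hshift

theorem measureReal_fiducialSup_le (hg : ∀ θ, Measurable (g · θ))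
    (hmono : ∀ u, Monotone (g u)) (hne : ∀ u s, {θ | g u θ = s}.Nonempty) {s θ₀ : ℝ}
    (hnull : μ {u | g u θ₀ = s} = 0) :
    μ.real {u | fiducialSup (g u) s ≤ θ₀} = 1 - μ.real {u | g u θ₀ ≤ s} := by
  have hsub : {u | s < g u θ₀} ⊆ {u | fiducialSup (g u) s ≤ θ₀} := fun u hu =>
    (fiducialSup_le_iff (hmono u) (hne u s)).2 fun θ hθ => hu.trans_le (hmono u hθ.le)
  have hsuper : {u | fiducialSup (g u) s ≤ θ₀} ⊆ {u | s < g u θ₀} ∪ {u | g u θ₀ = s} :=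
    fun u hu => (le_of_fiducialSup_le (hmono u) (hne u s) hu).lt_or_eq.imp id Eq.symm
  have heq : μ {u | fiducialSup (g u) s ≤ θ₀} = μ {u | s < g u θ₀} := by
    refine le_antisymm ?_ (measure_mono hsub)
    calc μ {u | fiducialSup (g u) s ≤ θ₀}
        ≤ μ {u | s < g u θ₀} + μ {u | g u θ₀ = s} :=
          (measure_mono hsuper).trans (measure_union_le _ _)
      _ = μ {u | s < g u θ₀} := by rw [hnull, add_zero]
  rw [measureReal_def, heq, ← measureReal_def,
    ← probReal_compl_eq_one_sub (measurableSet_le (hg θ₀) measurable_const)]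
  simp only [compl_ofPred, not_le]

end Exactness

theorem fiducial_conditional_exactness_general
    {M : Type*} [MeasurableSpace M]
    (n : ℕ)
    (G : M → ℝ → (Fin n → ℝ)) (hG : Measurable (Function.uncurry G))
    (S : (Fin n → ℝ) → ℝ) (A : (Fin n → ℝ) → (Fin (n - 1) → ℝ))
    (hsmooth : ContDiff ℝ 1 (fun x : Fin n → ℝ => (S x, A x)))
    (GS : M → ℝ → ℝ) (hGS : ∀ (u : M) (θ : ℝ), GS u θ = S (G u θ))
    (hmono : ∀ u : M, Monotone (GS u))
    (hne : ∀ (u : M) (s : ℝ), {θ : ℝ | GS u θ = s}.Nonempty)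
    (s₀ θ₀ : ℝ)
    (ν : Measure (Fin (n - 1) → ℝ))
    (κ : Kernel (Fin (n - 1) → ℝ) M) [IsMarkovKernel κ] :
    (∀ᵐ a ∂ν, ∃ L : ℝ,
      Tendsto (fun ε : ℝ => (κ a {u : M | GS u (θ₀ + ε) ≤ s₀}).toReal) (𝓝[>] 0) (𝓝 L) ∧
      (κ a {u : M |
        sSup (Real.toEReal '' {θ : ℝ | GS u θ = s₀}) ≤ (θ₀ : EReal)}).toReal = 1 - L) ∧
    ((∀ θ s : ℝ, ∀ᵐ a ∂ν, κ a {u : M | GS u θ = s} = 0) →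
      ∀ᵐ a ∂ν,
        (κ a {u : M |
          sSup (Real.toEReal '' {θ : ℝ | GS u θ = s₀}) ≤ (θ₀ : EReal)}).toReal
          = 1 - (κ a {u : M | GS u θ₀ ≤ s₀}).toReal) := by
  have hGS_meas : ∀ θ, Measurable (GS · θ) := fun θ => by
    simp only [hGS]
    exact hsmooth.continuous.fst.measurable.comp (hG.comp measurable_prodMk_right)
  refine ⟨ae_of_all _ fun a => ⟨_, tendsto_measureReal_le_fiducialSup (κ a) hGS_meas hmono hne
    s₀ θ₀, (sub_sub_cancel 1 _).symm⟩, fun hnull => ?_⟩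
  filter_upwards [hnull θ₀ s₀] with a ha
  exact measureReal_fiducialSup_le (κ a) hGS_meas hmono hne ha

/-- conditional version of the exactness theorem given an ancillary statistic.
For `ν`-almost every value `a` of the ancillary statistic,
`μ_a(Q⁺_{s₀} ≤ θ₀) = 1 − lim_{ε↓0} F_{S|a}(s₀, θ₀+ε)`; if moreover the conditional laws are
atomless, the conditional fiducial distribution is exact:
`μ_a(Q⁺_{s₀} ≤ θ₀) = 1 − F_{S|a}(s₀, θ₀)` for `ν`-a.e. `a`. -/
theorem fiducial_conditional_exactness
    {M : Type*} [MeasurableSpace M] [StandardBorelSpace M]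
    {Ω : Type*} [MeasurableSpace Ω] (P : Measure Ω) [IsProbabilityMeasure P]
    (U : Ω → M) (hU : Measurable U)
    (n : ℕ) (hn : 2 ≤ n)
    (G : M → ℝ → (Fin n → ℝ)) (hG : Measurable (Function.uncurry G))
    (S : (Fin n → ℝ) → ℝ) (A : (Fin n → ℝ) → (Fin (n - 1) → ℝ))
    (hinj : Function.Injective (fun x : Fin n → ℝ => (S x, A x)))
    (hsmooth : ContDiff ℝ 1 (fun x : Fin n → ℝ => (S x, A x)))
    (GA : M → (Fin (n - 1) → ℝ)) (hGA : Measurable GA)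
    (hancillary : ∀ (u : M) (θ : ℝ), A (G u θ) = GA u)
    (GS : M → ℝ → ℝ) (hGS : ∀ (u : M) (θ : ℝ), GS u θ = S (G u θ))
    (hmono : ∀ u : M, Monotone (GS u))
    (hne : ∀ (u : M) (s : ℝ), {θ : ℝ | GS u θ = s}.Nonempty)
    (s₀ θ₀ : ℝ)
    (ν : Measure (Fin (n - 1) → ℝ))
    (hν : ν = Measure.map (fun ω => GA (U ω)) P)
    (κ : Kernel (Fin (n - 1) → ℝ) M) [IsMarkovKernel κ]
    (hker : ∀ B : Set M, MeasurableSet B → ∀ C : Set (Fin (n - 1) → ℝ), MeasurableSet C →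
      ∫⁻ a in C, κ a B ∂ν = P {ω : Ω | U ω ∈ B ∧ GA (U ω) ∈ C}) :
    (∀ᵐ a ∂ν, ∃ L : ℝ,
      Tendsto (fun ε : ℝ => (κ a {u : M | GS u (θ₀ + ε) ≤ s₀}).toReal) (𝓝[>] 0) (𝓝 L) ∧
      (κ a {u : M |
        sSup (Real.toEReal '' {θ : ℝ | GS u θ = s₀}) ≤ (θ₀ : EReal)}).toReal = 1 - L) ∧
    ((∀ θ s : ℝ, ∀ᵐ a ∂ν, κ a {u : M | GS u θ = s} = 0) →
      ∀ᵐ a ∂ν,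
        (κ a {u : M |
          sSup (Real.toEReal '' {θ : ℝ | GS u θ = s₀}) ≤ (θ₀ : EReal)}).toReal
          = 1 - (κ a {u : M | GS u θ₀ ≤ s₀}).toReal) :=
  fiducial_conditional_exactness_general n G hG S A hsmooth GS hGS hmono hne s₀ θ₀ ν κ
end

section
/- For each fixed x > 0, the Gamma(θ,1) distribution function F(x,θ) := (1/Γ(θ)) ∫₀ˣ t^{θ−1} e^{−t} dt, viewed as a function of the shape parameter θ ∈ (0,∞), is continuous, strictly decreasing, tends to 1 as θ → 0⁺ and tends to 0 as θ → ∞; consequently θ ↦ F(x,θ) maps (0,∞) onto (0,1). -/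
open MeasureTheory Filter Set Topology Real

/-!
Split `Γ(θ) = γ(θ, x) + Γ(θ, x)` into the integrals of `t^(θ-1) e^(-t)` over `(0, x)` and
`(x, ∞)`, so that `F(θ) = γ/(γ + Γ)`. Monotonicity is a likelihood-ratio argument: for
`θ₁ < θ₂` the ratio `t^(θ₂-θ₁)` of the integrands is below `x^(θ₂-θ₁)` on `(0, x)` and above it
on `(x, ∞)`, whence `γ(θ₂, x) Γ(θ₁, x) < γ(θ₁, x) Γ(θ₂, x)`. Continuity is dominated convergence.
As `θ → 0⁺`, `Γ(θ, x) ≤ x^(θ-1) e^(-x)` stays bounded while `Γ(θ) → ∞`; as `θ → ∞`,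
`γ(θ, x) ≤ x^(θ-1)` while `Γ(θ) ≥ Γ(θ, 2x) ≥ (2x)^(θ-1) e^(-2x)`. The intermediate value theorem
then gives the image.
-/

section SetIntegral

variable {α : Type*} [MeasurableSpace α] {μ : Measure α} {s : Set α} {f g : α → ℝ}

lemma setIntegral_pos_of_forall_pos (hs : MeasurableSet s) (hμs : μ s ≠ 0)
    (hf : IntegrableOn f s μ) (hpos : ∀ t ∈ s, 0 < f t) : 0 < ∫ t in s, f t ∂μ := by
  rw [setIntegral_pos_iff_support_of_nonneg_ae
    (ae_restrict_of_forall_mem hs fun t ht => (hpos t ht).le) hf]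
  exact (pos_iff_ne_zero.2 hμs).trans_le (measure_mono fun t ht => ⟨(hpos t ht).ne', ht⟩)

lemma setIntegral_lt_setIntegral_of_forall_lt (hs : MeasurableSet s) (hμs : μ s ≠ 0)
    (hf : IntegrableOn f s μ) (hg : IntegrableOn g s μ) (hlt : ∀ t ∈ s, f t < g t) :
    ∫ t in s, f t ∂μ < ∫ t in s, g t ∂μ := by
  have := setIntegral_pos_of_forall_pos (f := fun t => g t - f t) hs hμs (hg.sub hf)
    fun t ht => sub_pos.2 (hlt t ht)
  rwa [integral_sub hg hf, sub_pos] at this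

end SetIntegral

lemma integrableOn_rpow_mul_exp_neg {θ : ℝ} (hθ : 0 < θ) :
    IntegrableOn (fun t : ℝ => t ^ (θ - 1) * exp (-t)) (Ioi 0) := by
  simpa only [mul_comm] using GammaIntegral_convergent hθ

lemma continuousAt_Gamma_of_pos {θ : ℝ} (hθ : 0 < θ) : ContinuousAt Gamma θ :=
  (differentiableAt_Gamma fun m => ((neg_nonpos.2 m.cast_nonneg).trans_lt hθ).ne').continuousAt

lemma tendsto_Gamma_nhdsGT_zero : Tendsto Gamma (𝓝[>] 0) atTop := by
  have hGamma_succ : Tendsto (fun θ => Gamma (θ + 1)) (𝓝[>] 0) (𝓝 1) := by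
    have := ((continuousAt_Gamma_of_pos one_pos).comp_of_eq
      (continuous_add_const 1).continuousAt (zero_add 1)).tendsto
    simpa [Function.comp_def, Gamma_one] using this.mono_left nhdsWithin_le_nhds
  refine (hGamma_succ.pos_mul_atTop one_pos tendsto_inv_nhdsGT_zero).congr' ?_
  filter_upwards [self_mem_nhdsWithin] with θ (hθ : 0 < θ)
  rw [Gamma_add_one hθ.ne', mul_comm θ, mul_assoc, mul_inv_cancel₀ hθ.ne', mul_one]

lemma rpow_le_rpow_add_rpow {t a b θ : ℝ} (ht : 0 < t) (ha : a ≤ θ) (hb : θ ≤ b) :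
    t ^ θ ≤ t ^ a + t ^ b := by
  rcases le_or_gt t 1 with h | h
  · linarith [rpow_le_rpow_of_exponent_ge ht h ha, rpow_pos_of_pos ht b]
  · linarith [rpow_le_rpow_of_exponent_le h.le hb, rpow_pos_of_pos ht a]

lemma ContinuousOn.surjOn_Ioo_of_tendsto {f : ℝ → ℝ} {a l u : ℝ} (hf : ContinuousOn f (Ioi a))
    (ha : Tendsto f (𝓝[>] a) (𝓝 u)) (hl : Tendsto f atTop (𝓝 l)) :
    SurjOn f (Ioi a) (Ioo l u) := by
  intro y hy
  obtain ⟨b, hby, hb⟩ := ((ha.eventually (eventually_gt_nhds hy.2)).and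
    self_mem_nhdsWithin).exists
  obtain ⟨c, hcy, hbc⟩ := ((hl.eventually (eventually_lt_nhds hy.1)).and
    (eventually_ge_atTop b)).exists
  have hsub : Icc b c ⊆ Ioi a := fun t ht => lt_of_lt_of_le hb ht.1
  obtain ⟨θ, hθ, rfl⟩ := intermediate_value_Icc' hbc (hf.mono hsub) ⟨hcy.le, hby.le⟩
  exact ⟨θ, hsub hθ, rfl⟩

noncomputable section

/-- `γ(θ, x)`, integrated over the open interval so that strict pointwise bounds apply. -/
def lowerIncompleteGamma (θ x : ℝ) : ℝ := ∫ t in Ioo 0 x, t ^ (θ - 1) * exp (-t)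

def upperIncompleteGamma (θ x : ℝ) : ℝ := ∫ t in Ioi x, t ^ (θ - 1) * exp (-t)

def regularizedLowerGamma (θ x : ℝ) : ℝ := lowerIncompleteGamma θ x / Gamma θ

end

section IncompleteGamma

variable {θ θ₁ θ₂ x : ℝ}

lemma Gamma_eq_lowerIncompleteGamma_add_upperIncompleteGamma (hθ : 0 < θ) (hx : 0 ≤ x) :
    Gamma θ = lowerIncompleteGamma θ x + upperIncompleteGamma θ x := by
  have hI := integrableOn_rpow_mul_exp_neg hθ
  rw [Gamma_eq_integral hθ, lowerIncompleteGamma, upperIncompleteGamma,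
    ← integral_Ioc_eq_integral_Ioo, ← setIntegral_union (Ioc_disjoint_Ioi le_rfl)
      measurableSet_Ioi (hI.mono_set Ioc_subset_Ioi_self) (hI.mono_set (Ioi_subset_Ioi hx)),
    Ioc_union_Ioi_eq_Ioi hx]
  simp_rw [mul_comm (exp _)]

lemma lowerIncompleteGamma_pos (hθ : 0 < θ) (hx : 0 < x) : 0 < lowerIncompleteGamma θ x :=
  setIntegral_pos_of_forall_pos measurableSet_Ioo (by simp [hx])
    ((integrableOn_rpow_mul_exp_neg hθ).mono_set Ioo_subset_Ioi_self)
    fun t ht => by have := ht.1; positivity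

lemma lowerIncompleteGamma_nonneg (θ x : ℝ) : 0 ≤ lowerIncompleteGamma θ x :=
  setIntegral_nonneg measurableSet_Ioo fun t ht => by have := ht.1; positivity

lemma upperIncompleteGamma_pos (hθ : 0 < θ) (hx : 0 ≤ x) : 0 < upperIncompleteGamma θ x :=
  setIntegral_pos_of_forall_pos measurableSet_Ioi (by simp)
    ((integrableOn_rpow_mul_exp_neg hθ).mono_set (Ioi_subset_Ioi hx))
    fun t ht => by have := hx.trans_lt ht; positivity

lemma lowerIncompleteGamma_le_Gamma (hθ : 0 < θ) (hx : 0 ≤ x) :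
    lowerIncompleteGamma θ x ≤ Gamma θ := by
  rw [Gamma_eq_lowerIncompleteGamma_add_upperIncompleteGamma hθ hx]
  linarith [upperIncompleteGamma_pos hθ hx]

lemma upperIncompleteGamma_le_Gamma (hθ : 0 < θ) (hx : 0 ≤ x) :
    upperIncompleteGamma θ x ≤ Gamma θ := by
  rw [Gamma_eq_lowerIncompleteGamma_add_upperIncompleteGamma hθ hx]
  linarith [lowerIncompleteGamma_nonneg θ x]

lemma upperIncompleteGamma_one (x : ℝ) : upperIncompleteGamma 1 x = exp (-x) := by
  simp only [upperIncompleteGamma, sub_self, rpow_zero, one_mul]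
  exact integral_exp_neg_Ioi x

lemma rpow_sub_one_eq_rpow_sub_mul {t : ℝ} (ht : 0 < t) (θ₁ θ₂ : ℝ) :
    t ^ (θ₂ - 1) = t ^ (θ₂ - θ₁) * t ^ (θ₁ - 1) := by
  rw [← rpow_add ht]; ring_nf

lemma lowerIncompleteGamma_lt_rpow_mul (hθ₁ : 0 < θ₁) (h : θ₁ < θ₂) (hx : 0 < x) :
    lowerIncompleteGamma θ₂ x < x ^ (θ₂ - θ₁) * lowerIncompleteGamma θ₁ x := by
  have hI {θ : ℝ} (hθ : 0 < θ) : IntegrableOn (fun t : ℝ => t ^ (θ - 1) * exp (-t)) (Ioo 0 x) :=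
    (integrableOn_rpow_mul_exp_neg hθ).mono_set Ioo_subset_Ioi_self
  rw [lowerIncompleteGamma, lowerIncompleteGamma, ← integral_const_mul]
  refine setIntegral_lt_setIntegral_of_forall_lt measurableSet_Ioo (by simp [hx])
    (hI (hθ₁.trans h)) ((hI hθ₁).const_mul _) fun t ht => ?_
  rw [rpow_sub_one_eq_rpow_sub_mul ht.1 θ₁ θ₂, mul_assoc]
  have := ht.1
  exact mul_lt_mul_of_pos_right (rpow_lt_rpow ht.1.le ht.2 (sub_pos.2 h)) (by positivity)

lemma rpow_mul_upperIncompleteGamma_lt (hθ₁ : 0 < θ₁) (h : θ₁ < θ₂) (hx : 0 < x) :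
    x ^ (θ₂ - θ₁) * upperIncompleteGamma θ₁ x < upperIncompleteGamma θ₂ x := by
  have hI {θ : ℝ} (hθ : 0 < θ) : IntegrableOn (fun t : ℝ => t ^ (θ - 1) * exp (-t)) (Ioi x) :=
    (integrableOn_rpow_mul_exp_neg hθ).mono_set (Ioi_subset_Ioi hx.le)
  rw [upperIncompleteGamma, upperIncompleteGamma, ← integral_const_mul]
  refine setIntegral_lt_setIntegral_of_forall_lt measurableSet_Ioi (by simp)
    ((hI hθ₁).const_mul _) (hI (hθ₁.trans h)) fun t ht => ?_
  have ht₀ := hx.trans ht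
  rw [rpow_sub_one_eq_rpow_sub_mul ht₀ θ₁ θ₂, mul_assoc]
  exact mul_lt_mul_of_pos_right (rpow_lt_rpow hx.le ht (sub_pos.2 h)) (by positivity)

lemma lowerIncompleteGamma_mul_upperIncompleteGamma_lt (hθ₁ : 0 < θ₁) (h : θ₁ < θ₂)
    (hx : 0 < x) :
    lowerIncompleteGamma θ₂ x * upperIncompleteGamma θ₁ x <
      lowerIncompleteGamma θ₁ x * upperIncompleteGamma θ₂ x := by
  have hA := lowerIncompleteGamma_pos hθ₁ hx
  have hB := upperIncompleteGamma_pos hθ₁ hx.le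
  calc lowerIncompleteGamma θ₂ x * upperIncompleteGamma θ₁ x
      < x ^ (θ₂ - θ₁) * lowerIncompleteGamma θ₁ x * upperIncompleteGamma θ₁ x :=
        mul_lt_mul_of_pos_right (lowerIncompleteGamma_lt_rpow_mul hθ₁ h hx) hB
    _ = lowerIncompleteGamma θ₁ x * (x ^ (θ₂ - θ₁) * upperIncompleteGamma θ₁ x) := by ring
    _ < lowerIncompleteGamma θ₁ x * upperIncompleteGamma θ₂ x :=
        mul_lt_mul_of_pos_left (rpow_mul_upperIncompleteGamma_lt hθ₁ h hx) hA

lemma continuousAt_lowerIncompleteGamma (hθ : 0 < θ) :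
    ContinuousAt (lowerIncompleteGamma · x) θ := by
  have hnhds : Ioo (θ / 2) (θ + 1) ∈ 𝓝 θ := Ioo_mem_nhds (by linarith) (by linarith)
  refine continuousAt_of_dominated (bound := fun t => t ^ (θ / 2 - 1) + t ^ θ) ?_ ?_ ?_ ?_
  · exact Eventually.of_forall fun θ' => Measurable.aestronglyMeasurable (by fun_prop)
  · filter_upwards [hnhds] with θ' hθ'
    filter_upwards [ae_restrict_mem measurableSet_Ioo] with t ht
    have ht₀ := ht.1
    rw [norm_of_nonneg (by positivity)]
    calc t ^ (θ' - 1) * exp (-t) ≤ t ^ (θ' - 1) :=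
          mul_le_of_le_one_right (by positivity) (exp_le_one_iff.2 (by linarith))
      _ ≤ t ^ (θ / 2 - 1) + t ^ θ :=
          rpow_le_rpow_add_rpow ht₀ (by linarith [hθ'.1]) (by linarith [hθ'.2])
  · have hbound : IntervalIntegrable (fun t : ℝ => t ^ (θ / 2 - 1) + t ^ θ) volume 0 x :=
      (intervalIntegral.intervalIntegrable_rpow' (by linarith)).add
        (intervalIntegral.intervalIntegrable_rpow' (by linarith))
    exact hbound.1.mono_set Ioo_subset_Ioc_self
  · filter_upwards [ae_restrict_mem measurableSet_Ioo] with t ht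
    exact ((continuousAt_const_rpow ht.1.ne').comp (continuousAt_id.sub continuousAt_const)).mul
      continuousAt_const

end IncompleteGamma

section RegularizedLowerGamma

variable {θ x : ℝ}

lemma regularizedLowerGamma_mem_Ioo (hθ : 0 < θ) (hx : 0 < x) :
    regularizedLowerGamma θ x ∈ Ioo 0 1 := by
  have hA := lowerIncompleteGamma_pos hθ hx
  have hB := upperIncompleteGamma_pos hθ hx.le
  rw [regularizedLowerGamma, Gamma_eq_lowerIncompleteGamma_add_upperIncompleteGamma hθ hx.le]
  exact ⟨by positivity, (div_lt_one (by positivity)).2 (by linarith)⟩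

lemma strictAntiOn_regularizedLowerGamma (hx : 0 < x) :
    StrictAntiOn (regularizedLowerGamma · x) (Ioi 0) := by
  intro θ₁ (hθ₁ : 0 < θ₁) θ₂ (hθ₂ : 0 < θ₂) h
  have := lowerIncompleteGamma_pos hθ₁ hx
  have := lowerIncompleteGamma_pos hθ₂ hx
  have := upperIncompleteGamma_pos hθ₁ hx.le
  have := upperIncompleteGamma_pos hθ₂ hx.le
  simp only [regularizedLowerGamma,
    Gamma_eq_lowerIncompleteGamma_add_upperIncompleteGamma hθ₁ hx.le,
    Gamma_eq_lowerIncompleteGamma_add_upperIncompleteGamma hθ₂ hx.le]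
  rw [div_lt_div_iff₀ (by positivity) (by positivity)]
  nlinarith [lowerIncompleteGamma_mul_upperIncompleteGamma_lt hθ₁ h hx]

lemma continuousOn_regularizedLowerGamma (x : ℝ) :
    ContinuousOn (regularizedLowerGamma · x) (Ioi 0) := fun _ hθ =>
  ((continuousAt_lowerIncompleteGamma hθ).div (continuousAt_Gamma_of_pos hθ)
    (Gamma_pos_of_pos hθ).ne').continuousWithinAt

lemma tendsto_regularizedLowerGamma_nhdsGT_zero (hx : 0 < x) :
    Tendsto (regularizedLowerGamma · x) (𝓝[>] 0) (𝓝 1) := by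
  have hdenom : Tendsto (fun θ => x ^ (1 - θ) * Gamma θ) (𝓝[>] 0) atTop := by
    have hpow : ContinuousAt (fun θ : ℝ => x ^ (1 - θ)) 0 :=
      continuousAt_const.rpow (continuousAt_const.sub continuousAt_id) (.inl hx.ne')
    refine Tendsto.pos_mul_atTop hx ?_ tendsto_Gamma_nhdsGT_zero
    simpa using hpow.tendsto.mono_left nhdsWithin_le_nhds
  have hupper : Tendsto (fun θ => upperIncompleteGamma θ x / Gamma θ) (𝓝[>] 0) (𝓝 0) := by
    refine squeeze_zero' ?_ ?_ ((tendsto_const_nhds (x := exp (-x))).div_atTop hdenom)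
    · filter_upwards [self_mem_nhdsWithin] with θ (hθ : 0 < θ)
      exact div_nonneg (upperIncompleteGamma_pos hθ hx.le).le (Gamma_pos_of_pos hθ).le
    · filter_upwards [Ioo_mem_nhdsGT one_pos] with θ hθ
      have hxθ : 0 < x ^ (1 - θ) := rpow_pos_of_pos hx _
      calc upperIncompleteGamma θ x / Gamma θ
          = x ^ (1 - θ) * upperIncompleteGamma θ x / (x ^ (1 - θ) * Gamma θ) :=
            (mul_div_mul_left _ _ hxθ.ne').symm
        _ ≤ exp (-x) / (x ^ (1 - θ) * Gamma θ) := by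
            rw [← upperIncompleteGamma_one]
            have := Gamma_pos_of_pos hθ.1
            gcongr
            exact (rpow_mul_upperIncompleteGamma_lt hθ.1 hθ.2 hx).le
  have hlower : Tendsto (fun θ => 1 - upperIncompleteGamma θ x / Gamma θ) (𝓝[>] 0) (𝓝 1) := by
    simpa using hupper.const_sub 1
  refine hlower.congr' ?_
  filter_upwards [self_mem_nhdsWithin] with θ (hθ : 0 < θ)
  rw [regularizedLowerGamma, eq_div_iff (Gamma_pos_of_pos hθ).ne', sub_mul,
    div_mul_cancel₀ _ (Gamma_pos_of_pos hθ).ne', one_mul,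
    Gamma_eq_lowerIncompleteGamma_add_upperIncompleteGamma hθ hx.le, add_sub_cancel_right]

lemma tendsto_regularizedLowerGamma_atTop (hx : 0 < x) :
    Tendsto (regularizedLowerGamma · x) atTop (𝓝 0) := by
  have h2x : 0 < 2 * x := by positivity
  have hbound : Tendsto (fun θ : ℝ => exp (2 * x) * (1 / 2) ^ (θ - 1)) atTop (𝓝 0) := by
    have hhalf := tendsto_rpow_atTop_of_base_lt_one (1 / 2) (by norm_num) (by norm_num)
    simpa [sub_eq_add_neg] using
      (hhalf.comp (tendsto_atTop_add_const_right _ (-1) tendsto_id)).const_mul (exp (2 * x))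
  refine squeeze_zero' ?_ ?_ hbound
  · filter_upwards [eventually_gt_atTop 0] with θ hθ
    exact div_nonneg (lowerIncompleteGamma_nonneg θ x) (Gamma_pos_of_pos hθ).le
  filter_upwards [eventually_gt_atTop 1] with θ hθ
  have hlower : lowerIncompleteGamma θ x ≤ x ^ (θ - 1) := calc
    _ ≤ x ^ (θ - 1) * lowerIncompleteGamma 1 x :=
        (lowerIncompleteGamma_lt_rpow_mul one_pos hθ hx).le
    _ ≤ x ^ (θ - 1) * Gamma 1 := by gcongr; exact lowerIncompleteGamma_le_Gamma one_pos hx.le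
    _ = x ^ (θ - 1) := by rw [Gamma_one, mul_one]
  have hGamma : (2 * x) ^ (θ - 1) * exp (-(2 * x)) ≤ Gamma θ := calc
    _ = (2 * x) ^ (θ - 1) * upperIncompleteGamma 1 (2 * x) := by rw [upperIncompleteGamma_one]
    _ ≤ upperIncompleteGamma θ (2 * x) := (rpow_mul_upperIncompleteGamma_lt one_pos hθ h2x).le
    _ ≤ Gamma θ := upperIncompleteGamma_le_Gamma (by linarith) h2x.le
  calc lowerIncompleteGamma θ x / Gamma θ
      ≤ x ^ (θ - 1) / ((2 * x) ^ (θ - 1) * exp (-(2 * x))) :=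
        div_le_div₀ (by positivity) hlower (by positivity) hGamma
    _ = exp (2 * x) * (1 / 2) ^ (θ - 1) := by
        rw [← show x / (2 * x) = 1 / 2 by field_simp, div_rpow hx.le h2x.le, exp_neg]
        field_simp

end RegularizedLowerGamma

/-- For fixed `x > 0`, the Gamma(θ,1) distribution function
`F(x,θ) = Γ(θ)⁻¹ ∫₀ˣ t^{θ−1} e^{−t} dt` is, as a function of the shape `θ ∈ (0,∞)`,
continuous, strictly decreasing, tends to `1` as `θ → 0⁺` and to `0` as `θ → ∞`;
consequently `θ ↦ F(x,θ)` maps `(0,∞)` onto `(0,1)`. -/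
theorem gamma_cdf_in_shape_parameter (x : ℝ) (hx : 0 < x)
    (F : ℝ → ℝ)
    (hF : ∀ θ : ℝ, F θ = (Real.Gamma θ)⁻¹ * ∫ t in (0 : ℝ)..x, t ^ (θ - 1) * Real.exp (-t)) :
    ContinuousOn F (Set.Ioi (0 : ℝ)) ∧
    StrictAntiOn F (Set.Ioi (0 : ℝ)) ∧
    Tendsto F (𝓝[>] (0 : ℝ)) (𝓝 1) ∧
    Tendsto F atTop (𝓝 0) ∧
    F '' Set.Ioi (0 : ℝ) = Set.Ioo (0 : ℝ) 1 := by
  obtain rfl : F = (regularizedLowerGamma · x) := funext fun θ => by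
    rw [hF, regularizedLowerGamma, lowerIncompleteGamma, intervalIntegral.integral_of_le hx.le,
      integral_Ioc_eq_integral_Ioo, inv_mul_eq_div]
  have hcont := continuousOn_regularizedLowerGamma x
  have hzero := tendsto_regularizedLowerGamma_nhdsGT_zero hx
  have htop := tendsto_regularizedLowerGamma_atTop hx
  refine ⟨hcont, strictAntiOn_regularizedLowerGamma hx, hzero, htop, ?_⟩
  exact Subset.antisymm (image_subset_iff.2 fun θ hθ => regularizedLowerGamma_mem_Ioo hθ hx)
    (hcont.surjOn_Ioo_of_tendsto hzero htop)
end

section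
/- (First order matching class for the bivariate normal correlation.) Fix ρ₀ ∈ (−1,1) and let a, b > 0 (representing a = A₁′(1+ρ₀) and b = A₂′(1−ρ₀) for a C¹ one-to-one transformation A = (A₁,A₂) of the sufficient statistics). Define the limiting Jacobian J(ρ₀,ρ) := a(1+ρ₀)/(1+ρ) + b(1−ρ₀)/(1−ρ) on (−1,1) and the Fisher information I(ρ) := (1+ρ²)/(1−ρ²)². Then the first order term vanishes, i.e. Δ₁ := I(ρ₀)^{−1/2} · (∂/∂ρ) log J(ρ₀,ρ)|_{ρ=ρ₀} + (d/dρ) I(ρ)^{−1/2}|_{ρ=ρ₀} = 0, if and only if a = b (1−ρ₀)²/(1+ρ₀)². -/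
/-!
Near `ρ₀` the Jacobian and the Fisher information are explicit rational functions of `ρ` and
`√(1 + ρ²)`, so `Δ₁` can be computed in closed form: with `s = √(1 + ρ₀²)` it equals
`(b (1 - ρ₀)² - a (1 + ρ₀)²) / ((a + b) s³)`, whose denominator is positive.
-/

open Real Filter Set Topology

lemma hasDerivAt_jacobian {a b ρ₀ : ℝ} (hp : 1 + ρ₀ ≠ 0) (hm : 1 - ρ₀ ≠ 0) :
    HasDerivAt (fun ρ => a * (1 + ρ₀) / (1 + ρ) + b * (1 - ρ₀) / (1 - ρ))
      (b / (1 - ρ₀) - a / (1 + ρ₀)) ρ₀ := by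
  have hdenp : HasDerivAt (fun ρ : ℝ => 1 + ρ) 1 ρ₀ := (hasDerivAt_id ρ₀).const_add 1
  have hdenm : HasDerivAt (fun ρ : ℝ => 1 - ρ) (-1) ρ₀ := by
    simpa using (hasDerivAt_id ρ₀).const_sub 1
  refine (((hasDerivAt_const ρ₀ (a * (1 + ρ₀))).div hdenp hp).add
    ((hasDerivAt_const ρ₀ (b * (1 - ρ₀))).div hdenm hm)).congr_deriv ?_
  field_simp
  ring

lemma hasDerivAt_log_jacobian {a b ρ₀ : ℝ} (hp : 1 + ρ₀ ≠ 0) (hm : 1 - ρ₀ ≠ 0)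
    (hab : a + b ≠ 0) :
    HasDerivAt (fun ρ => log (a * (1 + ρ₀) / (1 + ρ) + b * (1 - ρ₀) / (1 - ρ)))
      ((b / (1 - ρ₀) - a / (1 + ρ₀)) / (a + b)) ρ₀ := by
  have hJ₀ : a * (1 + ρ₀) / (1 + ρ₀) + b * (1 - ρ₀) / (1 - ρ₀) = a + b := by field_simp
  have h := (hasDerivAt_jacobian hp hm).log (hJ₀ ▸ hab)
  rwa [hJ₀] at h

lemma inv_sqrt_fisherInfo {ρ : ℝ} (hρ : ρ ∈ Ioo (-1 : ℝ) 1) :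
    (√((1 + ρ ^ 2) / (1 - ρ ^ 2) ^ 2))⁻¹ = (1 - ρ ^ 2) / √(1 + ρ ^ 2) := by
  have hpos : 0 < 1 - ρ ^ 2 := by nlinarith [hρ.1, hρ.2]
  rw [sqrt_div (by positivity), sqrt_sq hpos.le, inv_div]

lemma hasDerivAt_one_sub_sq_div_sqrt_one_add_sq (ρ : ℝ) :
    HasDerivAt (fun ρ => (1 - ρ ^ 2) / √(1 + ρ ^ 2))
      (-ρ * (3 + ρ ^ 2) / √(1 + ρ ^ 2) ^ 3) ρ := by
  have hs : 0 < √(1 + ρ ^ 2) := sqrt_pos.mpr (by positivity)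
  have hs2 : √(1 + ρ ^ 2) ^ 2 = 1 + ρ ^ 2 := sq_sqrt (by positivity)
  have hnum : HasDerivAt (fun ρ : ℝ => 1 - ρ ^ 2) (-(2 * ρ)) ρ := by
    simpa using (hasDerivAt_pow 2 ρ).const_sub 1
  have hrad : HasDerivAt (fun ρ : ℝ => 1 + ρ ^ 2) (2 * ρ) ρ := by
    simpa using (hasDerivAt_pow 2 ρ).const_add 1
  refine (hnum.div (hrad.sqrt (by positivity)) hs.ne').congr_deriv ?_
  field_simp
  linear_combination (-2 * ρ) * hs2

lemma deriv_inv_sqrt_fisherInfo {ρ₀ : ℝ} (hρ₀ : ρ₀ ∈ Ioo (-1 : ℝ) 1) :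
    deriv (fun ρ => (√((1 + ρ ^ 2) / (1 - ρ ^ 2) ^ 2))⁻¹) ρ₀
      = -ρ₀ * (3 + ρ₀ ^ 2) / √(1 + ρ₀ ^ 2) ^ 3 := by
  have hloc : (fun ρ => (√((1 + ρ ^ 2) / (1 - ρ ^ 2) ^ 2))⁻¹) =ᶠ[𝓝 ρ₀]
      fun ρ => (1 - ρ ^ 2) / √(1 + ρ ^ 2) :=
    eventually_of_mem (Ioo_mem_nhds hρ₀.1 hρ₀.2) fun _ => inv_sqrt_fisherInfo
  rw [hloc.deriv_eq, (hasDerivAt_one_sub_sq_div_sqrt_one_add_sq ρ₀).deriv]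

lemma first_order_term_eq {a b ρ s : ℝ} (hp : 1 + ρ ≠ 0) (hm : 1 - ρ ≠ 0) (hab : a + b ≠ 0)
    (hs : s ≠ 0) (hs2 : s ^ 2 = 1 + ρ ^ 2) :
    (1 - ρ ^ 2) / s * ((b / (1 - ρ) - a / (1 + ρ)) / (a + b)) + -ρ * (3 + ρ ^ 2) / s ^ 3
      = (b * (1 - ρ) ^ 2 - a * (1 + ρ) ^ 2) / ((a + b) * s ^ 3) := by
  field_simp
  linear_combination (1 - ρ ^ 2) * (b * (1 + ρ) - a * (1 - ρ)) * hs2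

/-- First order matching class for the bivariate normal correlation.
With limiting Jacobian `J(ρ₀,ρ) = a(1+ρ₀)/(1+ρ) + b(1−ρ₀)/(1−ρ)` and Fisher information
`I(ρ) = (1+ρ²)/(1−ρ²)²`, the first order coverage term
`Δ₁ = I(ρ₀)^{−1/2} ∂_ρ log J(ρ₀,ρ)|_{ρ₀} + (d/dρ)I(ρ)^{−1/2}|_{ρ₀}` vanishes if and only if
`a = b(1−ρ₀)²/(1+ρ₀)²`. -/
theorem first_order_matching_bivariate_normal
    (ρ₀ : ℝ) (hρ₀ : ρ₀ ∈ Set.Ioo (-1 : ℝ) 1)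
    (a b : ℝ) (ha : 0 < a) (hb : 0 < b)
    (J : ℝ → ℝ) (hJ : ∀ ρ : ℝ, J ρ = a * (1 + ρ₀) / (1 + ρ) + b * (1 - ρ₀) / (1 - ρ))
    (I : ℝ → ℝ) (hI : ∀ ρ : ℝ, I ρ = (1 + ρ ^ 2) / (1 - ρ ^ 2) ^ 2) :
    (Real.sqrt (I ρ₀))⁻¹ * deriv (fun ρ => Real.log (J ρ)) ρ₀ +
        deriv (fun ρ => (Real.sqrt (I ρ))⁻¹) ρ₀ = 0
      ↔ a = b * (1 - ρ₀) ^ 2 / (1 + ρ₀) ^ 2 := by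
  simp only [hJ, hI]
  have hp : 0 < 1 + ρ₀ := by linarith [hρ₀.1]
  have hm : 0 < 1 - ρ₀ := by linarith [hρ₀.2]
  have hab : 0 < a + b := add_pos ha hb
  have hs : 0 < √(1 + ρ₀ ^ 2) := sqrt_pos.mpr (by positivity)
  rw [inv_sqrt_fisherInfo hρ₀, (hasDerivAt_log_jacobian hp.ne' hm.ne' hab.ne').deriv,
    deriv_inv_sqrt_fisherInfo hρ₀,
    first_order_term_eq hp.ne' hm.ne' hab.ne' hs.ne' (sq_sqrt (by positivity)),
    div_eq_zero_iff, or_iff_left (by positivity), sub_eq_zero, eq_div_iff (by positivity),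
    eq_comm]
end

section
/- (Second order exactness for the bivariate normal correlation.) Fix ρ₀ ∈ (−1,1) and let a, b > 0 satisfy the first order matching condition a = b (1−ρ₀)²/(1+ρ₀)². Define J(ρ₀,ρ) := a(1+ρ₀)/(1+ρ) + b(1−ρ₀)/(1−ρ), I(ρ) := (1+ρ²)/(1−ρ²)², and m₃(ρ) := ∫_{ℝ²} ( ∂³/∂ρ³ log f_ρ(x,y) ) f_ρ(x,y) dx dy. Then the second order coverage term vanishes: Δ₂ := J(ρ₀,ρ₀)^{−1} [ (1/6)(d/dρ){ I(ρ)^{−2} J(ρ₀,ρ) m₃(ρ) } − (1/2)(d²/dρ²){ J(ρ₀,ρ) I(ρ)^{−1} } ] evaluated at ρ = ρ₀ equals 0. -/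
/-!
In the coordinates `x + y` and `x - y` the correlated pair splits into two independent centred
normals of variances `2(1 + ρ)` and `2(1 - ρ)`, so `log f_ρ` is the sum of two Gaussian
scale-family log-likelihoods evaluated at `1 + ρ` and `1 - ρ`. Since `E[∂³_v log φ_v] = 2 / v³`
for `N(0, v)`, this gives `m₃(ρ) = 2 / (1 + ρ)³ - 2 / (1 - ρ)³`. The moments are computed after
the shear `(x, u) ↦ (x, u + ρ x)`, which turns `f_ρ` into the product density of
`N(0, 1) ⊗ N(0, 1 - ρ²)`.

The matching condition is exactly what makes `J(ρ₀, ρ) = E (1 + ρ₀ ρ) / (1 - ρ²)` with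
`E = 2b(1 - ρ₀)/(1 + ρ₀)`. Then both functions differentiated in `Δ₂` are `E` times rational
functions whose denominators are powers of `1 + ρ²`, and the bracket vanishes at `ρ = ρ₀` by a
direct computation.
-/

open MeasureTheory Filter Set Topology
open Real ProbabilityTheory
open scoped NNReal

lemma integrable_sq_linear_prod {μ ν : Measure ℝ} [IsFiniteMeasure μ] [IsFiniteMeasure ν]
    (hμ : MemLp id 2 μ) (hν : MemLp id 2 ν) (a b : ℝ) :
    Integrable (fun p : ℝ × ℝ => (a * p.1 + b * p.2) ^ 2) (μ.prod ν) :=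
  (((hμ.comp_fst ν).const_mul a).add ((hν.comp_snd μ).const_mul b)).integrable_sq

lemma integral_sq_linear_prod {μ ν : Measure ℝ} [IsProbabilityMeasure μ] [IsProbabilityMeasure ν]
    (hμ : MemLp id 2 μ) (hν : MemLp id 2 ν) (a b : ℝ) :
    ∫ p, (a * p.1 + b * p.2) ^ 2 ∂μ.prod ν =
      a ^ 2 * ∫ x, x ^ 2 ∂μ + 2 * a * b * (∫ x, x ∂μ) * (∫ y, y ∂ν) + b ^ 2 * ∫ y, y ^ 2 ∂ν := by
  have h₁ : Integrable (fun p : ℝ × ℝ => a ^ 2 * p.1 ^ 2) (μ.prod ν) :=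
    (hμ.integrable_sq.comp_fst ν).const_mul _
  have h₂ : Integrable (fun p : ℝ × ℝ => 2 * a * b * (p.1 * p.2)) (μ.prod ν) :=
    ((hμ.integrable one_le_two).mul_prod (hν.integrable one_le_two)).const_mul _
  have h₃ : Integrable (fun p : ℝ × ℝ => b ^ 2 * p.2 ^ 2) (μ.prod ν) :=
    (hν.integrable_sq.comp_snd μ).const_mul _
  calc ∫ p, (a * p.1 + b * p.2) ^ 2 ∂μ.prod ν
      = ∫ p, (a ^ 2 * p.1 ^ 2 + 2 * a * b * (p.1 * p.2) + b ^ 2 * p.2 ^ 2) ∂μ.prod ν := by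
        congr 1; ext p; ring
    _ = _ := by
        rw [integral_add (h₁.fun_add h₂) h₃, integral_add h₁ h₂, integral_const_mul,
          integral_const_mul, integral_const_mul, integral_fun_fst (fun x => x ^ 2),
          integral_fun_snd (fun y => y ^ 2), integral_prod_mul (fun x => x) (fun y => y)]
        simp [mul_assoc]

lemma integral_sq_gaussianReal_zero (v : ℝ≥0) : ∫ x, x ^ 2 ∂gaussianReal 0 v = v := by
  rw [← variance_id_gaussianReal (μ := 0) (v := v),
    variance_of_integral_eq_zero measurable_id.aemeasurable integral_id_gaussianReal]
  rfl

lemma integral_sq_linear_gaussianReal_prod (v w : ℝ≥0) (a b : ℝ) :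
    ∫ p, (a * p.1 + b * p.2) ^ 2 ∂(gaussianReal 0 v).prod (gaussianReal 0 w) =
      a ^ 2 * v + b ^ 2 * w := by
  rw [integral_sq_linear_prod (memLp_id_gaussianReal 2) (memLp_id_gaussianReal 2),
    integral_sq_gaussianReal_zero, integral_sq_gaussianReal_zero, integral_id_gaussianReal]
  ring

lemma gaussianReal_prod_gaussianReal {v w : ℝ≥0} (hv : v ≠ 0) (hw : w ≠ 0) (m₁ m₂ : ℝ) :
    (gaussianReal m₁ v).prod (gaussianReal m₂ w) =
      (volume : Measure (ℝ × ℝ)).withDensity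
        (fun q => gaussianPDF m₁ v q.1 * gaussianPDF m₂ w q.2) := by
  rw [gaussianReal_of_var_ne_zero _ hv, gaussianReal_of_var_ne_zero _ hw,
    prod_withDensity (measurable_gaussianPDF _ _) (measurable_gaussianPDF _ _),
    Measure.volume_eq_prod]

lemma integral_gaussianReal_prod_gaussianReal {v w : ℝ≥0} (hv : v ≠ 0) (hw : w ≠ 0) (m₁ m₂ : ℝ)
    (g : ℝ × ℝ → ℝ) :
    ∫ q, g q ∂(gaussianReal m₁ v).prod (gaussianReal m₂ w) =
      ∫ q, gaussianPDFReal m₁ v q.1 * gaussianPDFReal m₂ w q.2 * g q := by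
  rw [gaussianReal_prod_gaussianReal hv hw,
    integral_withDensity_eq_integral_toReal_smul (by fun_prop)
      (Eventually.of_forall fun _ => ENNReal.mul_lt_top gaussianPDF_lt_top gaussianPDF_lt_top)]
  simp [toReal_gaussianPDF]

def shearEquiv (c : ℝ) : (ℝ × ℝ) ≃ᵐ (ℝ × ℝ) where
  toFun p := (p.1, p.2 + c * p.1)
  invFun p := (p.1, p.2 - c * p.1)
  left_inv p := by simp
  right_inv p := by simp
  measurable_toFun := measurable_fst.prodMk (by fun_prop)
  measurable_invFun := measurable_fst.prodMk (by fun_prop)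

lemma measurePreserving_shearEquiv (c : ℝ) : MeasurePreserving (shearEquiv c) := by
  rw [Measure.volume_eq_prod]
  exact (MeasurePreserving.id volume).skew_product (g := fun x y => y + c * x) (by fun_prop)
    (Eventually.of_forall fun x => map_add_right_eq_self volume (c * x))

lemma integral_comp_shear (c : ℝ) (g : ℝ × ℝ → ℝ) :
    ∫ p : ℝ × ℝ, g (p.1, p.2 + c * p.1) = ∫ p, g p :=
  (measurePreserving_shearEquiv c).integral_comp' g

noncomputable def bivariateNormalPDF (ρ : ℝ) (p : ℝ × ℝ) : ℝ :=
  (2 * π * √(1 - ρ ^ 2))⁻¹ * exp (-(p.1 ^ 2 - 2 * ρ * p.1 * p.2 + p.2 ^ 2) / (2 * (1 - ρ ^ 2)))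

lemma bivariateNormalPDF_shear {ρ : ℝ} (hρ : ρ ^ 2 < 1) (x u : ℝ) :
    bivariateNormalPDF ρ (x, u + ρ * x) =
      gaussianPDFReal 0 1 x * gaussianPDFReal 0 (1 - ρ ^ 2).toNNReal u := by
  have hs : 0 < 1 - ρ ^ 2 := by linarith
  have hsqrt : √(2 * π * 1) * √(2 * π * (1 - ρ ^ 2)) = 2 * π * √(1 - ρ ^ 2) := by
    rw [← sqrt_mul (by positivity), show 2 * π * 1 * (2 * π * (1 - ρ ^ 2)) =
      (2 * π) ^ 2 * (1 - ρ ^ 2) by ring, sqrt_mul (by positivity), sqrt_sq (by positivity)]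
  simp only [bivariateNormalPDF, gaussianPDFReal, Real.coe_toNNReal _ hs.le, NNReal.coe_one,
    sub_zero]
  rw [mul_mul_mul_comm, ← mul_inv, hsqrt, ← exp_add]
  congr 2
  field_simp
  ring

lemma integral_mul_bivariateNormalPDF {ρ : ℝ} (hρ : ρ ^ 2 < 1) (g : ℝ × ℝ → ℝ) :
    ∫ p, g p * bivariateNormalPDF ρ p =
      ∫ q, g (q.1, q.2 + ρ * q.1) ∂(gaussianReal 0 1).prod (gaussianReal 0 (1 - ρ ^ 2).toNNReal) := by
  have hw : (1 - ρ ^ 2).toNNReal ≠ 0 := by simpa using hρ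
  rw [integral_gaussianReal_prod_gaussianReal one_ne_zero hw, ← integral_comp_shear ρ]
  congr 1
  ext q
  rw [bivariateNormalPDF_shear hρ]
  ring

lemma integral_quadratic_mul_bivariateNormalPDF {ρ : ℝ} (hρ : ρ ^ 2 < 1) (α β γ : ℝ) :
    ∫ p, (α + β * (p.1 + p.2) ^ 2 + γ * (p.1 - p.2) ^ 2) * bivariateNormalPDF ρ p =
      α + 2 * β * (1 + ρ) + 2 * γ * (1 - ρ) := by
  set P := (gaussianReal 0 1).prod (gaussianReal 0 (1 - ρ ^ 2).toNNReal)
  have hsq : ∀ a b : ℝ, Integrable (fun q : ℝ × ℝ => (a * q.1 + b * q.2) ^ 2) P :=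
    integrable_sq_linear_prod (memLp_id_gaussianReal 2) (memLp_id_gaussianReal 2)
  rw [integral_mul_bivariateNormalPDF hρ]
  calc ∫ q, α + β * (q.1 + (q.2 + ρ * q.1)) ^ 2 + γ * (q.1 - (q.2 + ρ * q.1)) ^ 2 ∂P
      = ∫ q, α + β * ((1 + ρ) * q.1 + 1 * q.2) ^ 2 + γ * ((1 - ρ) * q.1 + (-1) * q.2) ^ 2 ∂P := by
        congr 1; ext q; ring
    _ = α + β * ((1 + ρ) ^ 2 * 1 + 1 ^ 2 * (1 - ρ ^ 2)) +
          γ * ((1 - ρ) ^ 2 * 1 + (-1) ^ 2 * (1 - ρ ^ 2)) := by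
        rw [integral_add ((integrable_const α).fun_add ((hsq _ _).const_mul β))
          ((hsq _ _).const_mul γ), integral_add (integrable_const α) ((hsq _ _).const_mul β),
          integral_const_mul, integral_const_mul, integral_sq_linear_gaussianReal_prod,
          integral_sq_linear_gaussianReal_prod, Real.coe_toNNReal _ (by linarith)]
        simp
    _ = α + 2 * β * (1 + ρ) + 2 * γ * (1 - ρ) := by ring

lemma Set.EqOn.iteratedDeriv_succ_of_hasDerivAt {𝕜 F : Type*} [NontriviallyNormedField 𝕜]
    [NormedAddCommGroup F] [NormedSpace 𝕜 F] {f g g' : 𝕜 → F} {U : Set 𝕜} {n : ℕ}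
    (hU : IsOpen U) (h : EqOn (iteratedDeriv n f) g U) (hg : ∀ x ∈ U, HasDerivAt g (g' x) x) :
    EqOn (iteratedDeriv (n + 1) f) g' U := fun x hx => by
  rw [iteratedDeriv_succ]
  exact ((hg x hx).congr_of_eventuallyEq (eventually_of_mem (hU.mem_nhds hx) h)).deriv

/-- The log-density of `N(0, v)` at a point `s`, written in terms of `q = s² / 2`. -/
noncomputable def gaussianLogLik (q v : ℝ) : ℝ := -log (2 * π * v) / 2 - q / v

section gaussianLogLik

variable {q v : ℝ}

lemma hasDerivAt_gaussianLogLik (hv : v ≠ 0) :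
    HasDerivAt (gaussianLogLik q) (q / v ^ 2 - 1 / (2 * v)) v := by
  have hlog := ((hasDerivAt_id' v).const_mul (2 * π)).log (by simp [hv, pi_ne_zero])
  refine ((hlog.fun_neg.div_const 2).fun_sub
    ((hasDerivAt_const v q).fun_div (hasDerivAt_id' v) hv)).congr_deriv ?_
  field_simp
  ring

lemma hasDerivAt_gaussianLogLik_deriv (hv : v ≠ 0) :
    HasDerivAt (fun v => q / v ^ 2 - 1 / (2 * v)) (1 / (2 * v ^ 2) - 2 * q / v ^ 3) v := by
  refine (((hasDerivAt_const v q).fun_div ((hasDerivAt_id' v).fun_pow 2) (by simpa)).fun_sub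
    ((hasDerivAt_const v 1).fun_div ((hasDerivAt_id' v).const_mul 2) (by simpa))).congr_deriv ?_
  field_simp
  ring

lemma hasDerivAt_gaussianLogLik_deriv2 (hv : v ≠ 0) :
    HasDerivAt (fun v => 1 / (2 * v ^ 2) - 2 * q / v ^ 3) (6 * q / v ^ 4 - 1 / v ^ 3) v := by
  refine (((hasDerivAt_const v 1).fun_div (((hasDerivAt_id' v).fun_pow 2).const_mul 2)
    (by simpa)).fun_sub ((hasDerivAt_const v (2 * q)).fun_div ((hasDerivAt_id' v).fun_pow 3)
    (by simpa))).congr_deriv ?_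
  field_simp
  ring

lemma iteratedDeriv_three_gaussianLogLik (hv : v ≠ 0) :
    iteratedDeriv 3 (gaussianLogLik q) v = 6 * q / v ^ 4 - 1 / v ^ 3 := by
  have hU : IsOpen ({0}ᶜ : Set ℝ) := isOpen_compl_singleton
  have h₀ : EqOn (iteratedDeriv 0 (gaussianLogLik q)) (gaussianLogLik q) {0}ᶜ :=
    fun _ _ => by rw [iteratedDeriv_zero]
  have h₁ := h₀.iteratedDeriv_succ_of_hasDerivAt hU fun _ hx => hasDerivAt_gaussianLogLik hx
  have h₂ := h₁.iteratedDeriv_succ_of_hasDerivAt hU fun _ hx => hasDerivAt_gaussianLogLik_deriv hx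
  exact h₂.iteratedDeriv_succ_of_hasDerivAt hU (fun _ hx => hasDerivAt_gaussianLogLik_deriv2 hx) hv

lemma contDiffAt_gaussianLogLik (hv : v ≠ 0) : ContDiffAt ℝ 3 (gaussianLogLik q) v := by
  unfold gaussianLogLik
  fun_prop (disch := simp [hv, pi_ne_zero])

end gaussianLogLik

lemma iteratedDeriv_three_gaussianLogLik_one_add_add_one_sub {q₁ q₂ ρ : ℝ} (h₁ : 1 + ρ ≠ 0)
    (h₂ : 1 - ρ ≠ 0) :
    iteratedDeriv 3 (fun r => gaussianLogLik q₁ (1 + r) + gaussianLogLik q₂ (1 - r)) ρ =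
      (6 * q₁ / (1 + ρ) ^ 4 - 1 / (1 + ρ) ^ 3) - (6 * q₂ / (1 - ρ) ^ 4 - 1 / (1 - ρ) ^ 3) := by
  have hneg : iteratedDeriv 3 (fun r => gaussianLogLik q₂ (1 - r)) ρ =
      (-1) ^ 3 * iteratedDeriv 3 (gaussianLogLik q₂) (1 - ρ) := by
    simpa [← sub_eq_add_neg, iteratedDeriv_comp_const_add] using
      iteratedDeriv_comp_neg 3 (fun z => gaussianLogLik q₂ (1 + z)) ρ
  rw [iteratedDeriv_fun_add, hneg, iteratedDeriv_comp_const_add]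
  · dsimp only
    rw [iteratedDeriv_three_gaussianLogLik h₁, iteratedDeriv_three_gaussianLogLik h₂]
    ring
  · exact (contDiffAt_gaussianLogLik h₁).comp ρ (by fun_prop)
  · exact (contDiffAt_gaussianLogLik h₂).comp ρ (by fun_prop)

lemma log_bivariateNormalPDF {ρ : ℝ} (hρ : ρ ∈ Ioo (-1 : ℝ) 1) (p : ℝ × ℝ) :
    log (bivariateNormalPDF ρ p) =
      gaussianLogLik ((p.1 + p.2) ^ 2 / 4) (1 + ρ) +
        gaussianLogLik ((p.1 - p.2) ^ 2 / 4) (1 - ρ) := by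
  have h₁ : 0 < 1 + ρ := by linarith [hρ.1]
  have h₂ : 0 < 1 - ρ := by linarith [hρ.2]
  have h2π : 0 < 2 * π := by positivity
  have hsq : 1 - ρ ^ 2 = (1 + ρ) * (1 - ρ) := by ring
  have hsqrt : 0 < √(1 - ρ ^ 2) := sqrt_pos.2 (by rw [hsq]; positivity)
  rw [bivariateNormalPDF, log_mul (by positivity) (exp_pos _).ne', log_inv, log_exp,
    log_mul h2π.ne' hsqrt.ne', log_sqrt (by rw [hsq]; positivity), hsq, log_mul h₁.ne' h₂.ne']
  simp only [gaussianLogLik]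
  rw [log_mul h2π.ne' h₁.ne', log_mul h2π.ne' h₂.ne']
  field_simp
  ring

lemma iteratedDeriv_three_log_bivariateNormalPDF {ρ : ℝ} (hρ : ρ ∈ Ioo (-1 : ℝ) 1)
    (p : ℝ × ℝ) :
    iteratedDeriv 3 (fun r => log (bivariateNormalPDF r p)) ρ =
      (1 / (1 - ρ) ^ 3 - 1 / (1 + ρ) ^ 3) + 3 / (2 * (1 + ρ) ^ 4) * (p.1 + p.2) ^ 2 +
        -3 / (2 * (1 - ρ) ^ 4) * (p.1 - p.2) ^ 2 := by
  have h₁ : 1 + ρ ≠ 0 := by linarith [hρ.1]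
  have h₂ : 1 - ρ ≠ 0 := by linarith [hρ.2]
  have hlog : (fun r => log (bivariateNormalPDF r p)) =ᶠ[𝓝 ρ] fun r =>
      gaussianLogLik ((p.1 + p.2) ^ 2 / 4) (1 + r) +
        gaussianLogLik ((p.1 - p.2) ^ 2 / 4) (1 - r) :=
    eventually_of_mem (Ioo_mem_nhds hρ.1 hρ.2) fun r hr => log_bivariateNormalPDF hr p
  rw [hlog.iteratedDeriv_eq, iteratedDeriv_three_gaussianLogLik_one_add_add_one_sub h₁ h₂]
  field_simp
  ring

lemma integral_iteratedDeriv_three_log_bivariateNormalPDF {ρ : ℝ} (hρ : ρ ∈ Ioo (-1 : ℝ) 1) :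
    ∫ p, iteratedDeriv 3 (fun r => log (bivariateNormalPDF r p)) ρ * bivariateNormalPDF ρ p =
      2 / (1 + ρ) ^ 3 - 2 / (1 - ρ) ^ 3 := by
  have h₁ : 1 + ρ ≠ 0 := by linarith [hρ.1]
  have h₂ : 1 - ρ ≠ 0 := by linarith [hρ.2]
  simp_rw [iteratedDeriv_three_log_bivariateNormalPDF hρ]
  rw [integral_quadratic_mul_bivariateNormalPDF (by nlinarith [hρ.1, hρ.2])]
  field_simp
  ring

lemma HasDerivAt.div_one_add_sq_pow {p : ℝ → ℝ} {p' x : ℝ} (hp : HasDerivAt p p' x) (n : ℕ) :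
    HasDerivAt (fun t => p t / (1 + t ^ 2) ^ n)
      ((p' * (1 + x ^ 2) - 2 * n * x * p x) / (1 + x ^ 2) ^ (n + 1)) x := by
  have hD : 1 + x ^ 2 ≠ 0 := by positivity
  refine (hp.fun_div ((((hasDerivAt_id' x).fun_pow 2).const_add 1).fun_pow n)
    (pow_ne_zero n hD)).congr_deriv ?_
  rcases n with _ | n
  · field_simp
    ring
  · field_simp
    push_cast
    ring

lemma jacobian_eq_of_matching {ρ₀ ρ a b : ℝ} (h₀ : 1 + ρ₀ ≠ 0) (h₁ : 1 + ρ ≠ 0) (h₂ : 1 - ρ ≠ 0)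
    (hab : a = b * (1 - ρ₀) ^ 2 / (1 + ρ₀) ^ 2) :
    a * (1 + ρ₀) / (1 + ρ) + b * (1 - ρ₀) / (1 - ρ) =
      2 * b * (1 - ρ₀) / (1 + ρ₀) * (1 + ρ₀ * ρ) / ((1 + ρ) * (1 - ρ)) := by
  rw [hab]
  field_simp
  ring

/-- Once `J(c, ρ) = E (1 + c ρ) / (1 - ρ²)` and `m₃(ρ) = 2 / (1 + ρ)³ - 2 / (1 - ρ)³`, the two
functions differentiated in `Δ₂` are `E` times the two functions below. -/
lemma second_order_bracket_eq_zero (c : ℝ) :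
    (1 / 6) * deriv (fun ρ => -4 * (ρ * (3 + ρ ^ 2) * (1 + c * ρ)) / (1 + ρ ^ 2) ^ 2) c -
      (1 / 2) * iteratedDeriv 2 (fun ρ => (1 + c * ρ) * (1 - ρ ^ 2) / (1 + ρ ^ 2)) c = 0 := by
  have hN : HasDerivAt (fun t => -4 * (t * (3 + t ^ 2) * (1 + c * t)))
      (-4 * (3 + 9 * c ^ 2 + 4 * c ^ 4)) c := by
    refine ((((hasDerivAt_id' c).fun_mul (((hasDerivAt_id' c).fun_pow 2).const_add 3)).fun_mul
      (((hasDerivAt_id' c).const_mul c).const_add 1)).const_mul (-4)).congr_deriv ?_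
    ring
  have hM : ∀ ρ, HasDerivAt (fun t => (1 + c * t) * (1 - t ^ 2)) (c - 2 * ρ - 3 * c * ρ ^ 2) ρ :=
    fun ρ => ((((hasDerivAt_id' ρ).const_mul c).const_add 1).fun_mul
      (((hasDerivAt_id' ρ).fun_pow 2).const_sub 1)).congr_deriv (by ring)
  have hP : HasDerivAt (fun t => c - 4 * t - 4 * c * t ^ 2 - c * t ^ 4)
      (-4 - 8 * c ^ 2 - 4 * c ^ 4) c := by
    refine (((((hasDerivAt_id' c).const_mul 4).const_sub c).fun_sub
      (((hasDerivAt_id' c).fun_pow 2).const_mul (4 * c))).fun_sub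
      (((hasDerivAt_id' c).fun_pow 4).const_mul c)).congr_deriv ?_
    ring
  have hG : deriv (fun ρ => (1 + c * ρ) * (1 - ρ ^ 2) / (1 + ρ ^ 2)) =
      fun ρ => (c - 4 * ρ - 4 * c * ρ ^ 2 - c * ρ ^ 4) / (1 + ρ ^ 2) ^ 2 := by
    ext ρ
    have h := (hM ρ).div_one_add_sq_pow 1
    simp only [pow_one] at h
    rw [h.deriv]
    field_simp
    ring
  rw [(hN.div_one_add_sq_pow 2).deriv, iteratedDeriv_succ, iteratedDeriv_one, hG,
    (hP.div_one_add_sq_pow 2).deriv]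
  field_simp
  ring

theorem second_order_exactness_bivariate_normal_general
    (ρ₀ : ℝ) (hρ₀ : ρ₀ ∈ Set.Ioo (-1 : ℝ) 1)
    (a b : ℝ)
    (hab : a = b * (1 - ρ₀) ^ 2 / (1 + ρ₀) ^ 2)
    (f : ℝ → ℝ × ℝ → ℝ)
    (hf : ∀ (r : ℝ) (p : ℝ × ℝ),
      f r p = (2 * Real.pi * Real.sqrt (1 - r ^ 2))⁻¹ *
        Real.exp (-(p.1 ^ 2 - 2 * r * p.1 * p.2 + p.2 ^ 2) / (2 * (1 - r ^ 2))))
    (J : ℝ → ℝ) (hJ : ∀ ρ : ℝ, J ρ = a * (1 + ρ₀) / (1 + ρ) + b * (1 - ρ₀) / (1 - ρ))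
    (I : ℝ → ℝ) (hI : ∀ ρ : ℝ, I ρ = (1 + ρ ^ 2) / (1 - ρ ^ 2) ^ 2)
    (m₃ : ℝ → ℝ)
    (hm₃ : ∀ ρ : ℝ,
      m₃ ρ = ∫ p : ℝ × ℝ, iteratedDeriv 3 (fun r => Real.log (f r p)) ρ * f ρ p) :
    (J ρ₀)⁻¹ *
        ((1 / 6) * deriv (fun ρ => (I ρ ^ 2)⁻¹ * J ρ * m₃ ρ) ρ₀ -
          (1 / 2) * iteratedDeriv 2 (fun ρ => J ρ * (I ρ)⁻¹) ρ₀) = 0 := by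
  obtain rfl : f = bivariateNormalPDF := funext fun r => funext (hf r)
  have h₀ : 1 + ρ₀ ≠ 0 := by linarith [hρ₀.1]
  set E := 2 * b * (1 - ρ₀) / (1 + ρ₀)
  have hnear : ∀ᶠ ρ in 𝓝 ρ₀, 1 + ρ ≠ 0 ∧ 1 - ρ ≠ 0 ∧
      J ρ = E * (1 + ρ₀ * ρ) / ((1 + ρ) * (1 - ρ)) ∧ m₃ ρ = 2 / (1 + ρ) ^ 3 - 2 / (1 - ρ) ^ 3 := by
    filter_upwards [Ioo_mem_nhds hρ₀.1 hρ₀.2] with ρ hρ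
    have h₁ : 1 + ρ ≠ 0 := by linarith [hρ.1]
    have h₂ : 1 - ρ ≠ 0 := by linarith [hρ.2]
    exact ⟨h₁, h₂, by rw [hJ, jacobian_eq_of_matching h₀ h₁ h₂ hab],
      by rw [hm₃, integral_iteratedDeriv_three_log_bivariateNormalPDF hρ]⟩
  have hF : (fun ρ => (I ρ ^ 2)⁻¹ * J ρ * m₃ ρ) =ᶠ[𝓝 ρ₀]
      fun ρ => E * (-4 * (ρ * (3 + ρ ^ 2) * (1 + ρ₀ * ρ)) / (1 + ρ ^ 2) ^ 2) := by
    filter_upwards [hnear] with ρ ⟨h₁, h₂, hJρ, hmρ⟩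
    rw [hI, hJρ, hmρ]
    field_simp
    ring
  have hG : (fun ρ => J ρ * (I ρ)⁻¹) =ᶠ[𝓝 ρ₀]
      fun ρ => E * ((1 + ρ₀ * ρ) * (1 - ρ ^ 2) / (1 + ρ ^ 2)) := by
    filter_upwards [hnear] with ρ ⟨h₁, h₂, hJρ, _⟩
    rw [hI, hJρ]
    field_simp
    ring
  rw [hF.deriv_eq, hG.iteratedDeriv_eq, deriv_const_mul_field', iteratedDeriv_const_mul_field]
  linear_combination (J ρ₀)⁻¹ * E * second_order_bracket_eq_zero ρ₀

/-- Second order exactness for the bivariate normal correlation.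
If the first order matching condition `a = b(1−ρ₀)²/(1+ρ₀)²` holds, then the second order
coverage term
`Δ₂ = J(ρ₀,ρ₀)⁻¹[(1/6)(d/dρ){I(ρ)⁻²J(ρ₀,ρ)m₃(ρ)} − (1/2)(d²/dρ²){J(ρ₀,ρ)I(ρ)⁻¹}]|_{ρ=ρ₀}`
vanishes. -/
theorem second_order_exactness_bivariate_normal
    (ρ₀ : ℝ) (hρ₀ : ρ₀ ∈ Set.Ioo (-1 : ℝ) 1)
    (a b : ℝ) (ha : 0 < a) (hb : 0 < b)
    (hab : a = b * (1 - ρ₀) ^ 2 / (1 + ρ₀) ^ 2)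
    (f : ℝ → ℝ × ℝ → ℝ)
    (hf : ∀ (r : ℝ) (p : ℝ × ℝ),
      f r p = (2 * Real.pi * Real.sqrt (1 - r ^ 2))⁻¹ *
        Real.exp (-(p.1 ^ 2 - 2 * r * p.1 * p.2 + p.2 ^ 2) / (2 * (1 - r ^ 2))))
    (J : ℝ → ℝ) (hJ : ∀ ρ : ℝ, J ρ = a * (1 + ρ₀) / (1 + ρ) + b * (1 - ρ₀) / (1 - ρ))
    (I : ℝ → ℝ) (hI : ∀ ρ : ℝ, I ρ = (1 + ρ ^ 2) / (1 - ρ ^ 2) ^ 2)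
    (m₃ : ℝ → ℝ)
    (hm₃ : ∀ ρ : ℝ,
      m₃ ρ = ∫ p : ℝ × ℝ, iteratedDeriv 3 (fun r => Real.log (f r p)) ρ * f ρ p) :
    (J ρ₀)⁻¹ *
        ((1 / 6) * deriv (fun ρ => (I ρ ^ 2)⁻¹ * J ρ * m₃ ρ) ρ₀ -
          (1 / 2) * iteratedDeriv 2 (fun ρ => J ρ * (I ρ)⁻¹) ρ₀) = 0 :=
  second_order_exactness_bivariate_normal_general ρ₀ hρ₀ a b hab f hf J hJ I hI m₃ hm₃
end

section
/- (Second order term for the scaled normal family.) Fix q > 0 and μ₀ > 0, and let a₁, a₂ > 0 satisfy the first order matching condition a₂ = a₁ q μ₀^{q/2 − 1}. Define J(μ₀,μ) := a₁ |1 + q(μ₀ − μ)/(2μ)| + (q/2) a₂ μ₀^{q/2}/μ on (0,∞), I(μ) := μ^{−q} + q²/(2μ²), and m₃(μ) := ∫_ℝ ( ∂³/∂μ³ log f_μ(x) ) f_μ(x) dx. Then the second order coverage term equals Δ₂ := J(μ₀,μ₀)^{−1} [ (1/6)(d/dμ){ I(μ)^{−2} J(μ₀,μ) m₃(μ) } −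 (1/2)(d²/dμ²){ J(μ₀,μ) I(μ)^{−1} } ] evaluated at μ = μ₀ (interpreting the absolute value in J as 1 + q(μ₀−μ)/(2μ) on a neighborhood of μ₀, where it is positive) = q(q−2) μ₀^{q+2} ( 2μ₀² + μ₀^q q(q−1) ) / ( 2μ₀² + μ₀^q q² )³; in particular Δ₂ = 0 when q = 2. -/
/-!
Near `μ₀` the argument of the absolute value in `J` is positive, so there
`J μ = a₁ (1 - q/2) + c/μ`, where the matching condition gives `c = a₁ q (μ₀² + q μ₀^q) / (2μ₀)`.
The third `μ`-derivative of `log f_μ(x)` is a quadratic polynomial in `x - μ`, so integrating it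
against `f_μ` needs only the mean and variance of `N(μ, μ^q)`; this gives
`m₃ μ = 3q μ^(-q-1) + q²(q+3)/(2μ³)`. With `J`, `I` and `m₃` explicit, `Δ₂` is a rational
function of `μ₀` and `μ₀^q`, obtained from the product and quotient rules.
-/

open MeasureTheory Filter Set Topology
open Real ProbabilityTheory
open scoped NNReal

lemma deriv_inv_sq_mul_mul {i j m : ℝ → ℝ} {x i' j' m' : ℝ} (hi : HasDerivAt i i' x)
    (hj : HasDerivAt j j' x) (hm : HasDerivAt m m' x) (hix : i x ≠ 0) :
    deriv (fun y => (i y ^ 2)⁻¹ * j y * m y) x =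
      ((j' * m x + j x * m') * i x - 2 * i' * j x * m x) / i x ^ 3 := by
  refine ((((hi.pow 2).inv (pow_ne_zero 2 hix)).mul hj).mul hm).deriv.trans ?_
  simp only [Pi.mul_apply, Pi.pow_apply, Pi.inv_apply]
  field_simp
  ring

lemma iteratedDeriv_two_mul_inv {i j i' j' : ℝ → ℝ} {x i'' j'' : ℝ}
    (hi : ∀ᶠ y in 𝓝 x, HasDerivAt i (i' y) y) (hj : ∀ᶠ y in 𝓝 x, HasDerivAt j (j' y) y)
    (hi' : HasDerivAt i' i'' x) (hj' : HasDerivAt j' j'' x) (hix : i x ≠ 0) :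
    iteratedDeriv 2 (fun y => j y * (i y)⁻¹) x =
      (j'' * i x ^ 2 - 2 * j' x * i' x * i x + j x * (2 * i' x ^ 2 - i'' * i x)) / i x ^ 3 := by
  have hne : ∀ᶠ y in 𝓝 x, i y ≠ 0 := hi.self_of_nhds.continuousAt.eventually_ne hix
  have hd : deriv (fun y => j y * (i y)⁻¹) =ᶠ[𝓝 x]
      fun y => j' y * (i y)⁻¹ - j y * i' y / i y ^ 2 := by
    filter_upwards [hi, hj, hne] with y hiy hjy hy
    refine (hjy.mul (hiy.inv hy)).deriv.trans ?_
    simp only [Pi.inv_apply]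
    ring
  rw [iteratedDeriv_succ, iteratedDeriv_one, hd.deriv_eq]
  refine ((hj'.mul (hi.self_of_nhds.inv hix)).sub ((hj.self_of_nhds.mul hi').div
    (hi.self_of_nhds.pow 2) (pow_ne_zero 2 hix))).deriv.trans ?_
  simp only [Pi.mul_apply, Pi.pow_apply, Pi.inv_apply]
  field_simp
  ring

lemma ContinuousAt.abs_eventuallyEq {g : ℝ → ℝ} {x₀ : ℝ} (hg : ContinuousAt g x₀)
    (hpos : 0 < g x₀) : (fun x => |g x|) =ᶠ[𝓝 x₀] g :=
  (hg.eventually (lt_mem_nhds hpos)).mono fun _ hx => abs_of_pos hx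

lemma hasDerivAt_const_add_div (a c : ℝ) {x : ℝ} (hx : x ≠ 0) :
    HasDerivAt (fun x => a + c / x) (-c / x ^ 2) x := by
  simpa [div_eq_mul_inv, neg_div] using ((hasDerivAt_inv hx).const_mul c).const_add a

lemma hasDerivAt_neg_div_sq (c : ℝ) {x : ℝ} (hx : x ≠ 0) :
    HasDerivAt (fun x => -c / x ^ 2) (2 * c / x ^ 3) x := by
  have h := (hasDerivAt_const x (-c)).div (hasDerivAt_pow 2 x) (pow_ne_zero 2 hx)
  refine h.congr_deriv ?_
  field_simp
  ring

lemma hasDerivAt_rpow_neg (q : ℝ) {m : ℝ} (hm : m ≠ 0) :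
    HasDerivAt (fun m : ℝ => m ^ (-q)) (-q * m ^ (-q) / m) m := by
  simpa only [rpow_sub_one hm, mul_div_assoc] using hasDerivAt_rpow_const (p := -q) (Or.inl hm)

noncomputable def secondOrderTerm (J I m₃ : ℝ → ℝ) (μ₀ : ℝ) : ℝ :=
  (J μ₀)⁻¹ * ((1 / 6) * deriv (fun μ => (I μ ^ 2)⁻¹ * J μ * m₃ μ) μ₀ -
    (1 / 2) * iteratedDeriv 2 (fun μ => J μ * (I μ)⁻¹) μ₀)

lemma secondOrderTerm_congr {J J' I I' m₃ m₃' : ℝ → ℝ} {μ₀ : ℝ} (hJ : J =ᶠ[𝓝 μ₀] J')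
    (hI : I =ᶠ[𝓝 μ₀] I') (hm₃ : m₃ =ᶠ[𝓝 μ₀] m₃') :
    secondOrderTerm J I m₃ μ₀ = secondOrderTerm J' I' m₃' μ₀ := by
  have h₁ : (fun μ => (I μ ^ 2)⁻¹ * J μ * m₃ μ) =ᶠ[𝓝 μ₀]
      fun μ => (I' μ ^ 2)⁻¹ * J' μ * m₃' μ := by
    filter_upwards [hJ, hI, hm₃] with μ hJμ hIμ hmμ
    rw [hJμ, hIμ, hmμ]
  have h₂ : (fun μ => J μ * (I μ)⁻¹) =ᶠ[𝓝 μ₀] fun μ => J' μ * (I' μ)⁻¹ := by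
    filter_upwards [hJ, hI] with μ hJμ hIμ
    rw [hJμ, hIμ]
  rw [secondOrderTerm, secondOrderTerm, h₁.deriv_eq, h₂.iteratedDeriv_eq 2, hJ.eq_of_nhds]

lemma integral_quadratic_gaussianReal (μ : ℝ) (v : ℝ≥0) (α β γ : ℝ) :
    ∫ x, α + β * (x - μ) + γ * (x - μ) ^ 2 ∂gaussianReal μ v = α + γ * v := by
  have hL1 : Integrable (fun x => x - μ) (gaussianReal μ v) :=
    ((memLp_id_gaussianReal 1).integrable le_rfl).sub (integrable_const μ)
  have hL2 : Integrable (fun x => (x - μ) ^ 2) (gaussianReal μ v) :=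
    ((memLp_id_gaussianReal 2).sub (memLp_const μ)).integrable_sq
  have hmean : ∫ x, (x - μ) ∂gaussianReal μ v = 0 := by
    rw [integral_sub (f := fun x => x) ((memLp_id_gaussianReal 1).integrable le_rfl)
      (integrable_const μ)]
    simp
  have hvar : ∫ x, (x - μ) ^ 2 ∂gaussianReal μ v = v := by
    simpa [variance_eq_integral measurable_id'.aemeasurable] using
      variance_fun_id_gaussianReal (μ := μ) (v := v)
  rw [integral_add (f := fun x => α + β * (x - μ)) ((integrable_const α).add (hL1.const_mul β))
      (hL2.const_mul γ), integral_add (integrable_const α) (hL1.const_mul β),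
    integral_const_mul, integral_const_mul, hmean, hvar]
  simp

namespace ScaledNormal

variable (q x : ℝ)

noncomputable def logPdf (m : ℝ) : ℝ :=
  -(1 / 2) * log (2 * π) - q / 2 * log m - (x - m) ^ 2 / 2 * m ^ (-q)

noncomputable def logPdfDeriv (m : ℝ) : ℝ :=
  -q / (2 * m) + (x - m) * m ^ (-q) + q * (x - m) ^ 2 * m ^ (-q) / (2 * m)

noncomputable def logPdfDeriv2 (m : ℝ) : ℝ :=
  q / (2 * m ^ 2) - m ^ (-q) - 2 * q * (x - m) * m ^ (-q) / m
    - q * (q + 1) * (x - m) ^ 2 * m ^ (-q) / (2 * m ^ 2)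

noncomputable def logPdfDeriv3 (m : ℝ) : ℝ :=
  -q / m ^ 3 + 3 * q * m ^ (-q) / m + 3 * q * (q + 1) * (x - m) * m ^ (-q) / m ^ 2
    + q * (q + 1) * (q + 2) * (x - m) ^ 2 * m ^ (-q) / (2 * m ^ 3)

variable {q x}

lemma hasDerivAt_logPdf {m : ℝ} (hm : m ≠ 0) :
    HasDerivAt (logPdf q x) (logPdfDeriv q x m) m := by
  have h := ((hasDerivAt_const m (-(1 / 2) * log (2 * π))).sub
    ((hasDerivAt_log hm).const_mul (q / 2))).sub
    ((((hasDerivAt_id m).const_sub x).pow 2).div_const 2 |>.mul (hasDerivAt_rpow_neg q hm))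
  refine h.congr_deriv ?_
  simp only [logPdfDeriv, id, Pi.pow_apply]
  field_simp
  ring

lemma hasDerivAt_logPdfDeriv {m : ℝ} (hm : m ≠ 0) :
    HasDerivAt (logPdfDeriv q x) (logPdfDeriv2 q x m) m := by
  have hsub := (hasDerivAt_id m).const_sub x
  have h := (((hasDerivAt_id m).const_mul 2).inv (by simpa using hm) |>.const_mul (-q)).add
    (hsub.mul (hasDerivAt_rpow_neg q hm)) |>.add
    ((((hsub.pow 2).const_mul q).mul (hasDerivAt_rpow_neg q hm)).div
      ((hasDerivAt_id m).const_mul 2) (by simpa using hm))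
  refine h.congr_deriv ?_
  simp only [logPdfDeriv2, id, Pi.mul_apply, Pi.pow_apply]
  field_simp
  ring

lemma hasDerivAt_logPdfDeriv2 {m : ℝ} (hm : m ≠ 0) :
    HasDerivAt (logPdfDeriv2 q x) (logPdfDeriv3 q x m) m := by
  have hsub := (hasDerivAt_id m).const_sub x
  have hsq : HasDerivAt (fun m : ℝ => 2 * m ^ 2) (2 * (2 * m)) m := by
    simpa using (hasDerivAt_pow 2 m).const_mul 2
  have h := (((hasDerivAt_const m q).div hsq (by positivity)).sub (hasDerivAt_rpow_neg q hm)).sub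
    ((((hsub.const_mul (2 * q)).mul (hasDerivAt_rpow_neg q hm))).div (hasDerivAt_id m) hm) |>.sub
    ((((hsub.pow 2).const_mul (q * (q + 1))).mul (hasDerivAt_rpow_neg q hm)).div hsq
      (by positivity))
  refine h.congr_deriv ?_
  simp only [logPdfDeriv3, id, Pi.mul_apply, Pi.pow_apply]
  field_simp
  ring

lemma gaussianPDFReal_rpow {m : ℝ} (hm : 0 < m) :
    gaussianPDFReal m (m ^ q).toNNReal x =
      (√(2 * π * m ^ q))⁻¹ * exp (-(x - m) ^ 2 / (2 * m ^ q)) := by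
  simp [gaussianPDFReal, Real.coe_toNNReal _ (rpow_nonneg hm.le q)]

lemma log_gaussianPDFReal_rpow {m : ℝ} (hm : 0 < m) :
    log (gaussianPDFReal m (m ^ q).toNNReal x) = logPdf q x m := by
  have hmq : 0 < m ^ q := rpow_pos_of_pos hm q
  rw [gaussianPDFReal_rpow hm, log_mul (by positivity) (exp_ne_zero _), log_inv, log_exp,
    log_sqrt (by positivity), log_mul (by positivity) hmq.ne', log_rpow hm, logPdf,
    rpow_neg hm.le]
  field_simp
  ring

lemma iteratedDeriv_three_eq_logPdfDeriv3 {g : ℝ → ℝ} (hg : EqOn g (logPdf q x) (Ioi 0))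
    {μ : ℝ} (hμ : 0 < μ) : iteratedDeriv 3 g μ = logPdfDeriv3 q x μ := by
  have h1 : EqOn (deriv (logPdf q x)) (logPdfDeriv q x) (Ioi 0) := fun m hm =>
    (hasDerivAt_logPdf (ne_of_gt hm)).deriv
  have h2 : EqOn (deriv (deriv (logPdf q x))) (logPdfDeriv2 q x) (Ioi 0) := fun m hm =>
    (h1.deriv isOpen_Ioi hm).trans (hasDerivAt_logPdfDeriv (ne_of_gt hm)).deriv
  rw [hg.iteratedDeriv_of_isOpen isOpen_Ioi 3 hμ, iteratedDeriv_eq_iterate]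
  exact (h2.deriv isOpen_Ioi hμ).trans (hasDerivAt_logPdfDeriv2 hμ.ne').deriv

variable (q) in
noncomputable def expectedLogPdfDeriv3 (μ : ℝ) : ℝ :=
  3 * q * μ ^ (-q) / μ + q ^ 2 * (q + 3) / (2 * μ ^ 3)

lemma integral_logPdfDeriv3_mul_gaussianPDFReal {μ : ℝ} (hμ : 0 < μ) :
    ∫ x, logPdfDeriv3 q x μ * gaussianPDFReal μ (μ ^ q).toNNReal x =
      expectedLogPdfDeriv3 q μ := by
  have hv : (μ ^ q).toNNReal ≠ 0 := by simpa using rpow_pos_of_pos hμ q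
  have hquad : ∀ x, logPdfDeriv3 q x μ = (-q / μ ^ 3 + 3 * q * μ ^ (-q) / μ)
      + 3 * q * (q + 1) * μ ^ (-q) / μ ^ 2 * (x - μ)
      + q * (q + 1) * (q + 2) * μ ^ (-q) / (2 * μ ^ 3) * (x - μ) ^ 2 := fun x => by
    rw [logPdfDeriv3]; ring
  simp_rw [mul_comm (logPdfDeriv3 q _ μ), ← smul_eq_mul,
    ← integral_gaussianReal_eq_integral_smul hv, hquad, integral_quadratic_gaussianReal,
    Real.coe_toNNReal _ (rpow_nonneg hμ.le q), expectedLogPdfDeriv3]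
  have hμq : μ ^ (-q) * μ ^ q = 1 := by rw [← rpow_add hμ, neg_add_cancel, rpow_zero]
  linear_combination q * (q + 1) * (q + 2) / (2 * μ ^ 3) * hμq

lemma integral_iteratedDeriv_three_log_mul {f : ℝ → ℝ → ℝ}
    (hf : ∀ m x : ℝ,
      f m x = (√(2 * π * m ^ q))⁻¹ * exp (-(x - m) ^ 2 / (2 * m ^ q)))
    {μ : ℝ} (hμ : 0 < μ) :
    ∫ x, iteratedDeriv 3 (fun m => log (f m x)) μ * f μ x = expectedLogPdfDeriv3 q μ := by
  have hfg : ∀ x, ∀ m ∈ Ioi (0 : ℝ), f m x = gaussianPDFReal m (m ^ q).toNNReal x :=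
    fun x m hm => by rw [hf, gaussianPDFReal_rpow hm]
  rw [← integral_logPdfDeriv3_mul_gaussianPDFReal hμ]
  refine integral_congr_ae (ae_of_all _ fun x => ?_)
  have hlog : EqOn (fun m => log (f m x)) (logPdf q x) (Ioi 0) := fun m hm => by
    simp only [hfg x m hm, log_gaussianPDFReal_rpow hm]
  simp only [iteratedDeriv_three_eq_logPdfDeriv3 hlog hμ, hfg x μ hμ]

variable (q) in
noncomputable def fisherInfo (μ : ℝ) : ℝ := μ ^ (-q) + q ^ 2 / (2 * μ ^ 2)

variable (q) in
noncomputable def fisherInfoDeriv (μ : ℝ) : ℝ := -q * μ ^ (-q) / μ - q ^ 2 / μ ^ 3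

lemma fisherInfo_pos {μ : ℝ} (hμ : 0 < μ) : 0 < fisherInfo q μ := by
  unfold fisherInfo; positivity

lemma hasDerivAt_fisherInfo {μ : ℝ} (hμ : μ ≠ 0) :
    HasDerivAt (fisherInfo q) (fisherInfoDeriv q μ) μ := by
  have h := (hasDerivAt_rpow_neg q hμ).add
    ((hasDerivAt_const μ (q ^ 2)).div ((hasDerivAt_pow 2 μ).const_mul 2) (by positivity))
  refine h.congr_deriv ?_
  simp only [fisherInfoDeriv]
  field_simp
  ring

lemma hasDerivAt_fisherInfoDeriv {μ : ℝ} (hμ : μ ≠ 0) :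
    HasDerivAt (fisherInfoDeriv q) (q * (q + 1) * μ ^ (-q) / μ ^ 2 + 3 * q ^ 2 / μ ^ 4) μ := by
  have h := (((hasDerivAt_rpow_neg q hμ).const_mul (-q)).div (hasDerivAt_id μ) hμ).sub
    ((hasDerivAt_const μ (q ^ 2)).div (hasDerivAt_pow 3 μ) (by positivity))
  refine h.congr_deriv ?_
  simp only [id]
  field_simp
  ring

lemma hasDerivAt_expectedLogPdfDeriv3 {μ : ℝ} (hμ : μ ≠ 0) :
    HasDerivAt (expectedLogPdfDeriv3 q)
      (-3 * q * (q + 1) * μ ^ (-q) / μ ^ 2 - 3 * q ^ 2 * (q + 3) / (2 * μ ^ 4)) μ := by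
  have h := (((hasDerivAt_rpow_neg q hμ).const_mul (3 * q)).div (hasDerivAt_id μ) hμ).add
    ((hasDerivAt_const μ (q ^ 2 * (q + 3))).div ((hasDerivAt_pow 3 μ).const_mul 2)
      (by positivity))
  refine h.congr_deriv ?_
  simp only [id]
  field_simp
  ring

lemma jacobian_eventuallyEq_of_matching {μ₀ a₁ a₂ : ℝ} (hμ₀ : 0 < μ₀)
    (hmatch : a₂ = a₁ * q * μ₀ ^ (q / 2 - 1)) :
    (fun μ => a₁ * |1 + q * (μ₀ - μ) / (2 * μ)| + q / 2 * a₂ * μ₀ ^ (q / 2) / μ) =ᶠ[𝓝 μ₀]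
      fun μ => a₁ * (1 - q / 2) + a₁ * q * (μ₀ ^ 2 + q * μ₀ ^ q) / (2 * μ₀) / μ := by
  have ha₂μ₀ : a₂ * μ₀ ^ (q / 2) = a₁ * q * μ₀ ^ q / μ₀ := by
    rw [hmatch, rpow_sub_one hμ₀.ne', mul_assoc, div_mul_eq_mul_div, ← rpow_add hμ₀, add_halves,
      mul_div_assoc]
  have hcont : ContinuousAt (fun μ => 1 + q * (μ₀ - μ) / (2 * μ)) μ₀ := by
    fun_prop (disch := positivity)
  filter_upwards [hcont.abs_eventuallyEq (by simp), eventually_ne_nhds hμ₀.ne'] with μ habs hμ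
  rw [habs, mul_assoc (q / 2) a₂, ha₂μ₀]
  field_simp
  ring

lemma secondOrderTerm_eq {μ₀ a : ℝ} (hμ₀ : 0 < μ₀) (ha : a ≠ 0) :
    secondOrderTerm (fun μ => a * (1 - q / 2) + a * q * (μ₀ ^ 2 + q * μ₀ ^ q) / (2 * μ₀) / μ)
        (fisherInfo q) (expectedLogPdfDeriv3 q) μ₀ =
      q * (q - 2) * μ₀ ^ (q + 2) * (2 * μ₀ ^ 2 + μ₀ ^ q * q * (q - 1)) /
        (2 * μ₀ ^ 2 + μ₀ ^ q * q ^ 2) ^ 3 := by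
  set c := a * q * (μ₀ ^ 2 + q * μ₀ ^ q) / (2 * μ₀)
  have hμ₀' : μ₀ ≠ 0 := hμ₀.ne'
  rw [secondOrderTerm,
    deriv_inv_sq_mul_mul (hasDerivAt_fisherInfo hμ₀') (hasDerivAt_const_add_div _ c hμ₀')
      (hasDerivAt_expectedLogPdfDeriv3 hμ₀') (fisherInfo_pos hμ₀).ne',
    iteratedDeriv_two_mul_inv (j' := fun μ => -c / μ ^ 2)
      ((eventually_ne_nhds hμ₀').mono fun _ hμ => hasDerivAt_fisherInfo hμ)
      ((eventually_ne_nhds hμ₀').mono fun _ hμ => hasDerivAt_const_add_div _ c hμ)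
      (hasDerivAt_fisherInfoDeriv hμ₀') (hasDerivAt_neg_div_sq c hμ₀') (fisherInfo_pos hμ₀).ne']
  -- `field_simp` only cancels `J μ₀` once it is visibly a product of nonzero factors.
  have hJμ₀ : a * (1 - q / 2) + c / μ₀ = a * (2 * μ₀ ^ 2 + μ₀ ^ q * q ^ 2) / (2 * μ₀ ^ 2) := by
    simp only [c]; field_simp; ring
  rw [hJμ₀]
  simp only [fisherInfo, fisherInfoDeriv, expectedLogPdfDeriv3, c]
  rw [rpow_neg hμ₀.le, rpow_add hμ₀, rpow_two]
  field_simp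
  ring

end ScaledNormal

theorem second_order_term_scaled_normal_general
    (q μ₀ : ℝ) (hμ₀ : 0 < μ₀)
    (a₁ a₂ : ℝ) (ha₁ : 0 < a₁)
    (hmatch : a₂ = a₁ * q * μ₀ ^ (q / 2 - 1))
    (f : ℝ → ℝ → ℝ)
    (hf : ∀ m x : ℝ,
      f m x = (Real.sqrt (2 * Real.pi * m ^ q))⁻¹ * Real.exp (-(x - m) ^ 2 / (2 * m ^ q)))
    (J : ℝ → ℝ)
    (hJ : ∀ μ : ℝ,
      J μ = a₁ * |1 + q * (μ₀ - μ) / (2 * μ)| + q / 2 * a₂ * μ₀ ^ (q / 2) / μ)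
    (I : ℝ → ℝ) (hI : ∀ μ : ℝ, I μ = μ ^ (-q) + q ^ 2 / (2 * μ ^ 2))
    (m₃ : ℝ → ℝ)
    (hm₃ : ∀ μ : ℝ,
      m₃ μ = ∫ x : ℝ, iteratedDeriv 3 (fun m => Real.log (f m x)) μ * f μ x) :
    (J μ₀)⁻¹ *
        ((1 / 6) * deriv (fun μ => (I μ ^ 2)⁻¹ * J μ * m₃ μ) μ₀ -
          (1 / 2) * iteratedDeriv 2 (fun μ => J μ * (I μ)⁻¹) μ₀)
      = q * (q - 2) * μ₀ ^ (q + 2) * (2 * μ₀ ^ 2 + μ₀ ^ q * q * (q - 1)) /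
          (2 * μ₀ ^ 2 + μ₀ ^ q * q ^ 2) ^ 3 ∧
    (q = 2 →
      (J μ₀)⁻¹ *
          ((1 / 6) * deriv (fun μ => (I μ ^ 2)⁻¹ * J μ * m₃ μ) μ₀ -
            (1 / 2) * iteratedDeriv 2 (fun μ => J μ * (I μ)⁻¹) μ₀) = 0) := by
  have hJ' := (EventuallyEq.of_eq (funext hJ)).trans
    (ScaledNormal.jacobian_eventuallyEq_of_matching hμ₀ hmatch)
  have hI' : I =ᶠ[𝓝 μ₀] ScaledNormal.fisherInfo q := .of_eq (funext hI)
  have hm₃' : m₃ =ᶠ[𝓝 μ₀] ScaledNormal.expectedLogPdfDeriv3 q :=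
    (eventually_gt_nhds hμ₀).mono fun μ hμ =>
      (hm₃ μ).trans (ScaledNormal.integral_iteratedDeriv_three_log_mul hf hμ)
  have hΔ₂ : secondOrderTerm J I m₃ μ₀ = _ :=
    (secondOrderTerm_congr hJ' hI' hm₃').trans (ScaledNormal.secondOrderTerm_eq hμ₀ ha₁.ne')
  exact ⟨hΔ₂, fun hq₂ => hΔ₂.trans (by rw [hq₂]; ring)⟩

/-- Second order term for the scaled normal family.
Under the first order matching condition `a₂ = a₁ q μ₀^{q/2−1}`, the second order coverage
term `Δ₂ = J(μ₀,μ₀)⁻¹[(1/6)(d/dμ){I(μ)⁻²J(μ₀,μ)m₃(μ)} − (1/2)(d²/dμ²){J(μ₀,μ)I(μ)⁻¹}]|_{μ₀}`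
equals `q(q−2)μ₀^{q+2}(2μ₀² + μ₀^q q(q−1)) / (2μ₀² + μ₀^q q²)³`; in particular it vanishes
when `q = 2`. -/
theorem second_order_term_scaled_normal
    (q μ₀ : ℝ) (hq : 0 < q) (hμ₀ : 0 < μ₀)
    (a₁ a₂ : ℝ) (ha₁ : 0 < a₁) (ha₂ : 0 < a₂)
    (hmatch : a₂ = a₁ * q * μ₀ ^ (q / 2 - 1))
    (f : ℝ → ℝ → ℝ)
    (hf : ∀ m x : ℝ,
      f m x = (Real.sqrt (2 * Real.pi * m ^ q))⁻¹ * Real.exp (-(x - m) ^ 2 / (2 * m ^ q)))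
    (J : ℝ → ℝ)
    (hJ : ∀ μ : ℝ,
      J μ = a₁ * |1 + q * (μ₀ - μ) / (2 * μ)| + q / 2 * a₂ * μ₀ ^ (q / 2) / μ)
    (I : ℝ → ℝ) (hI : ∀ μ : ℝ, I μ = μ ^ (-q) + q ^ 2 / (2 * μ ^ 2))
    (m₃ : ℝ → ℝ)
    (hm₃ : ∀ μ : ℝ,
      m₃ μ = ∫ x : ℝ, iteratedDeriv 3 (fun m => Real.log (f m x)) μ * f μ x) :
    (J μ₀)⁻¹ *
        ((1 / 6) * deriv (fun μ => (I μ ^ 2)⁻¹ * J μ * m₃ μ) μ₀ -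
          (1 / 2) * iteratedDeriv 2 (fun μ => J μ * (I μ)⁻¹) μ₀)
      = q * (q - 2) * μ₀ ^ (q + 2) * (2 * μ₀ ^ 2 + μ₀ ^ q * q * (q - 1)) /
          (2 * μ₀ ^ 2 + μ₀ ^ q * q ^ 2) ^ 3 ∧
    (q = 2 →
      (J μ₀)⁻¹ *
          ((1 / 6) * deriv (fun μ => (I μ ^ 2)⁻¹ * J μ * m₃ μ) μ₀ -
            (1 / 2) * iteratedDeriv 2 (fun μ => J μ * (I μ)⁻¹) μ₀) = 0) :=
  second_order_term_scaled_normal_general q μ₀ hμ₀ a₁ a₂ ha₁ hmatch f hf J hJ I hI m₃ hm₃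
end
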